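/- arXiv:2111.04358 — 4 statements merged into one kernel-verified Lean document; each statement's English description precedes it below -/
import Mathlib

section
/- Let f(z) = Σ_{j≥0} α_j z^j be a real power series with radius of convergence R_f, and let A be a nonnegative n×n matrix with spectral radius ρ(A) < R_f such that f(A) is entrywise nonnegative. Then the distinguished spectrum satisfies σ_D(f(A)) = f(σ_D(A)). -/
open Filter Finset

noncomputable section

/-- Max-algebra product of matrices: `(A ⊗ B) i j = max_l A i l * B l j`. -/
def maxMul {n : ℕ} (A B : Matrix (Fin n) (Fin n) ℝ) : Matrix (Fin n) (Fin n) ℝ :=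
  fun i j => ⨆ l, A i l * B l j

/-- Max-algebra powers `A^k_⊗`. -/
def maxPow {n : ℕ} (A : Matrix (Fin n) (Fin n) ℝ) : ℕ → Matrix (Fin n) (Fin n) ℝ
  | 0 => fun i j => if i = j then 1 else 0
  | k + 1 => maxMul (maxPow A k) A

/-- Max-algebra action of a matrix on a vector: `(A ⊗ x) i = max_j A i j * x j`. -/
def maxVecMul {n : ℕ} (A : Matrix (Fin n) (Fin n) ℝ) (x : Fin n → ℝ) : Fin n → ℝ :=
  fun i => ⨆ j, A i j * x j

/-- Max norm of a vector: `‖x‖ = max_i x i`. -/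
def vnorm {n : ℕ} (x : Fin n → ℝ) : ℝ := ⨆ i, x i

/-- Max entry norm of a matrix: `‖A‖ = max_{i,j} A i j`. -/
def matNorm {n : ℕ} (A : Matrix (Fin n) (Fin n) ℝ) : ℝ := ⨆ i, ⨆ j, A i j

/-- Max-algebra local spectral radius `r_x(A) = lim_k ‖A^k_⊗ ⊗ x‖^{1/k}`
(the limit exists, so we may define it as the `limsup`). -/
def rloc {n : ℕ} (A : Matrix (Fin n) (Fin n) ℝ) (x : Fin n → ℝ) : ℝ :=
  Filter.atTop.limsup fun k : ℕ => (vnorm (maxVecMul (maxPow A k) x)) ^ ((k : ℝ)⁻¹)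

/-- Classical local spectral radius `ρ_x(A) = limsup_k ‖A^k x‖^{1/k}`. -/
def rhox {n : ℕ} (A : Matrix (Fin n) (Fin n) ℝ) (x : Fin n → ℝ) : ℝ :=
  Filter.atTop.limsup fun k : ℕ => (vnorm ((A ^ k).mulVec x)) ^ ((k : ℝ)⁻¹)

/-- Hadamard (entrywise) power `A^{(t)} = [a_{ij}^t]`. -/
def hadPow {n : ℕ} (A : Matrix (Fin n) (Fin n) ℝ) (t : ℝ) : Matrix (Fin n) (Fin n) ℝ :=
  fun i j => (A i j) ^ t

/-- The `i`-th standard basis vector. -/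
def e {n : ℕ} (i : Fin n) : Fin n → ℝ := fun j => if j = i then 1 else 0

end
/-- Distinguished spectrum: eigenvalues admitting a nonzero nonnegative eigenvector. -/
def distSpec {n : ℕ} (A : Matrix (Fin n) (Fin n) ℝ) : Set ℝ :=
  {l : ℝ | 0 ≤ l ∧ ∃ x : Fin n → ℝ, (∀ i, 0 ≤ x i) ∧ x ≠ 0 ∧ A.mulVec x = l • x}

/-- Spectral radius of a nonnegative matrix, via the Gelfand-type formula. -/
noncomputable def specRad {n : ℕ} (A : Matrix (Fin n) (Fin n) ℝ) : ℝ :=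
  Filter.atTop.limsup fun k : ℕ => (matNorm (A ^ k)) ^ ((k : ℝ)⁻¹)

namespace Stmt11Aux

variable {n : ℕ}

lemma mulVec_nonneg (A : Matrix (Fin n) (Fin n) ℝ) (hA : ∀ i j, 0 ≤ A i j)
    {x : Fin n → ℝ} (hx : ∀ i, 0 ≤ x i) : ∀ i, 0 ≤ A.mulVec x i := by
  intro i
  simp only [Matrix.mulVec, dotProduct]
  exact Finset.sum_nonneg fun j _ => mul_nonneg (hA i j) (hx j)

lemma mulVec_mono (A : Matrix (Fin n) (Fin n) ℝ) (hA : ∀ i j, 0 ≤ A i j)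
    {x y : Fin n → ℝ} (h : ∀ i, x i ≤ y i) : ∀ i, A.mulVec x i ≤ A.mulVec y i := by
  intro i
  simp only [Matrix.mulVec, dotProduct]
  exact Finset.sum_le_sum fun j _ => mul_le_mul_of_nonneg_left (h j) (hA i j)

lemma exists_pos_coord {x : Fin n → ℝ} (hx : ∀ i, 0 ≤ x i) (hx0 : x ≠ 0) :
    ∃ i, 0 < x i := by
  by_contra h
  push_neg at h
  exact hx0 (funext fun i => le_antisymm (h i) (hx i))

lemma tendsto_mulVec_coord (A : Matrix (Fin n) (Fin n) ℝ) {u : ℕ → Fin n → ℝ}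
    {v : Fin n → ℝ} (h : ∀ j, Tendsto (fun k => u k j) atTop (nhds (v j))) (i : Fin n) :
    Tendsto (fun k => A.mulVec (u k) i) atTop (nhds (A.mulVec v i)) := by
  simp only [Matrix.mulVec, dotProduct]
  exact tendsto_finset_sum _ fun j _ => (h j).const_mul (A i j)

lemma geomBound (r : ℝ) (h0 : 0 ≤ r) (h1 : r < 1) (M : ℕ) :
    ∑ i ∈ Finset.range M, r ^ i ≤ (1-r)⁻¹ := by
  have h2 : (0:ℝ) < 1 - r := by linarith
  rw [geom_sum_eq (by linarith : r ≠ 1)]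
  have key : (r^M - 1)/(r-1) = (1-r^M)*(1-r)⁻¹ := by
    rw [← neg_div_neg_eq, neg_sub, neg_sub, div_eq_mul_inv]
  rw [key]
  have h3 : 1 - r^M ≤ 1 := by
    have : 0 ≤ r^M := pow_nonneg h0 M
    linarith
  calc (1-r^M)*(1-r)⁻¹ ≤ 1*(1-r)⁻¹ := mul_le_mul_of_nonneg_right h3 (inv_nonneg.2 h2.le)
  _ = (1-r)⁻¹ := one_mul _

lemma nat_lt_div_succ_mul (k N : ℕ) (h : 0 < N) : k < (k/N + 1) * N := by
  have h1 := Nat.div_add_mod k N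
  have h2 := Nat.mod_lt k h
  calc k = N * (k/N) + k % N := h1.symm
  _ < N * (k/N) + N := by omega
  _ = (k/N + 1) * N := by ring

lemma grouped_geom_bound (r : ℝ) (h0 : 0 ≤ r) (h1 : r < 1) (N M : ℕ) (hN : 0 < N) :
    ∑ k ∈ Finset.range M, r ^ (k / N) ≤ (N : ℝ) * (1-r)⁻¹ := by
  classical
  rw [Finset.sum_comp (fun q : ℕ => r ^ q) (fun k => k / N)]
  have himg : (Finset.range M).image (fun k => k / N) ⊆ Finset.range M := by
    intro q hq
    simp only [Finset.mem_image, Finset.mem_range] at hq ⊢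
    obtain ⟨k, hk, rfl⟩ := hq
    exact lt_of_le_of_lt (Nat.div_le_self k N) hk
  have hcard : ∀ q, ((Finset.range M).filter (fun k => k / N = q)).card ≤ N := by
    intro q
    have hsub : (Finset.range M).filter (fun k => k / N = q) ⊆ Finset.Ico (q*N) (q*N + N) := by
      intro k hk
      simp only [Finset.mem_filter, Finset.mem_range] at hk
      obtain ⟨-, rfl⟩ := hk
      simp only [Finset.mem_Ico]
      refine ⟨Nat.div_mul_le_self k N, ?_⟩
      have h3 := nat_lt_div_succ_mul k N hN
      rw [add_mul, one_mul] at h3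
      exact h3
    calc _ ≤ (Finset.Ico (q*N) (q*N + N)).card := Finset.card_le_card hsub
    _ = N := by rw [Nat.card_Ico]; omega
  calc ∑ q ∈ (Finset.range M).image (fun k => k / N),
        ((Finset.range M).filter (fun k => k / N = q)).card • r ^ q
      ≤ ∑ q ∈ (Finset.range M).image (fun k => k / N), (N:ℝ) * r ^ q := by
        apply Finset.sum_le_sum
        intro q _
        rw [nsmul_eq_mul]
        exact mul_le_mul_of_nonneg_right (by exact_mod_cast hcard q) (pow_nonneg h0 q)
  _ ≤ ∑ q ∈ Finset.range M, (N:ℝ) * r ^ q := by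
        apply Finset.sum_le_sum_of_subset_of_nonneg himg
        intro q _ _
        positivity
  _ = (N:ℝ) * ∑ q ∈ Finset.range M, r ^ q := by rw [Finset.mul_sum]
  _ ≤ (N:ℝ) * (1-r)⁻¹ := by
        apply mul_le_mul_of_nonneg_left (geomBound r h0 h1 M) (by positivity)

section Cone

variable (A : Matrix (Fin n) (Fin n) ℝ) (K : Set (Fin n → ℝ))

/-- The contradiction step: if the normalized iterates of a super-eigenvector
decay to zero, then `tstar` is not a lower bound for super-eigenvalues. -/
lemma iterate_no_decay (hA : ∀ i j, 0 ≤ A i j)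
    (hKpos : ∀ x ∈ K, ∀ i, 0 ≤ x i)
    (hKcl : IsClosed K)
    (hKadd : ∀ x ∈ K, ∀ y ∈ K, x + y ∈ K)
    (hKsmul : ∀ c : ℝ, 0 ≤ c → ∀ x ∈ K, c • x ∈ K)
    (hKA : ∀ x ∈ K, A.mulVec x ∈ K)
    (tstar : ℝ) (htpos : 0 < tstar)
    (x0 : Fin n → ℝ) (hx0K : x0 ∈ K) (hx0ne : x0 ≠ 0)
    (hsup : ∀ i, A.mulVec x0 i ≤ tstar * x0 i)
    (hzero : ∀ i, Tendsto (fun k => (fun x : Fin n → ℝ => tstar⁻¹ • A.mulVec x)^[k] x0 i)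
      atTop (nhds 0))
    (hlow : ∀ t : ℝ, 0 ≤ t → ∀ x ∈ K, x ≠ 0 →
      (∀ i, A.mulVec x i ≤ t * x i) → tstar ≤ t) : False := by
  classical
  set st : (Fin n → ℝ) → (Fin n → ℝ) := fun x => tstar⁻¹ • A.mulVec x with hst
  set u : ℕ → Fin n → ℝ := fun k => st^[k] x0 with hu
  have hu0 : u 0 = x0 := rfl
  have husucc : ∀ k, u (k+1) = tstar⁻¹ • A.mulVec (u k) := by
    intro k
    show st^[k+1] x0 = _
    rw [Function.iterate_succ_apply']
  have htinv : 0 ≤ tstar⁻¹ := inv_nonneg.2 htpos.le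
  have huK : ∀ k, u k ∈ K := by
    intro k
    induction k with
    | zero => exact hx0K
    | succ k ih =>
      rw [husucc]
      exact hKsmul _ htinv _ (hKA _ ih)
  have hunn : ∀ k i, 0 ≤ u k i := fun k => hKpos _ (huK k)
  have humono : ∀ k i, u (k+1) i ≤ u k i := by
    intro k
    induction k with
    | zero =>
      intro i
      rw [husucc 0, hu0]
      simp only [Pi.smul_apply, smul_eq_mul]
      calc tstar⁻¹ * A.mulVec x0 i ≤ tstar⁻¹ * (tstar * x0 i) :=
            mul_le_mul_of_nonneg_left (hsup i) htinv
      _ = x0 i := by field_simp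
    | succ k ih =>
      intro i
      have h1 : A.mulVec (u (k+1)) i ≤ A.mulVec (u k) i := mulVec_mono A hA ih i
      have h2 := mul_le_mul_of_nonneg_left h1 htinv
      calc u (k+2) i = tstar⁻¹ * A.mulVec (u (k+1)) i := by
            rw [husucc (k+1)]; simp
      _ ≤ tstar⁻¹ * A.mulVec (u k) i := h2
      _ = u (k+1) i := by rw [husucc k]; simp
  have hanti : ∀ i, Antitone fun k => u k i := fun i =>
    antitone_nat_of_succ_le fun k => humono k i
  -- find N with u N ≤ (1/2) x0
  have hNex : ∃ N : ℕ, 0 < N ∧ ∀ i, u N i ≤ (1/2) * x0 i := by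
    have hev : ∀ i, ∀ᶠ k in atTop, u k i ≤ (1/2) * x0 i := by
      intro i
      rcases (hKpos x0 hx0K i).eq_or_lt with hz | hpos
      · apply Eventually.of_forall
        intro k
        have h1 : u k i ≤ u 0 i := hanti i (Nat.zero_le k)
        rw [hu0] at h1
        rw [← hz] at h1 ⊢
        simpa using h1
      · have h12 : (0:ℝ) < 1/2 * x0 i := by positivity
        exact ((hzero i).eventually_lt_const h12).mono fun k hk => hk.le
    have := (eventually_all.2 hev).and (eventually_gt_atTop 0)
    obtain ⟨N, hN1, hN0⟩ := this.exists
    exact ⟨N, hN0, hN1⟩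
  obtain ⟨N, hNpos, hNle⟩ := hNex
  -- iterate monotonicity / linearity
  have st_mono : ∀ x z : Fin n → ℝ, (∀ i, x i ≤ z i) → ∀ i, st x i ≤ st z i := by
    intro x z h i
    simp only [hst, Pi.smul_apply, smul_eq_mul]
    exact mul_le_mul_of_nonneg_left (mulVec_mono A hA h i) htinv
  have stN_mono : ∀ (m : ℕ) (x z : Fin n → ℝ), (∀ i, x i ≤ z i) →
      ∀ i, st^[m] x i ≤ st^[m] z i := by
    intro m
    induction m with
    | zero => intro x z h i; simpa using h i
    | succ m ih =>
      intro x z h i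
      rw [Function.iterate_succ_apply', Function.iterate_succ_apply']
      exact st_mono _ _ (ih x z h) i
  have st_smul : ∀ (c : ℝ) (x : Fin n → ℝ), st (c • x) = c • st x := by
    intro c x
    simp only [hst, Matrix.mulVec_smul]
    rw [smul_comm]
  have stN_smul : ∀ (m : ℕ) (c : ℝ) (x : Fin n → ℝ), st^[m] (c • x) = c • st^[m] x := by
    intro m
    induction m with
    | zero => intro c x; simp
    | succ m ih =>
      intro c x
      rw [Function.iterate_succ_apply', Function.iterate_succ_apply', ih, st_smul]
  -- geometric decay on blocks
  have hblock : ∀ q i, u (q*N) i ≤ (1/2:ℝ)^q * x0 i := by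
    intro q
    induction q with
    | zero => intro i; simp [hu0]
    | succ q ih =>
      intro i
      have h1 : u ((q+1)*N) = st^[N] (u (q*N)) := by
        show st^[(q+1)*N] x0 = st^[N] (st^[q*N] x0)
        rw [← Function.iterate_add_apply]
        congr 1
        ring
      rw [h1]
      have h2 : ∀ j, u (q*N) j ≤ ((1/2:ℝ)^q • x0) j := by
        intro j
        simpa using ih j
      calc st^[N] (u (q*N)) i ≤ st^[N] ((1/2:ℝ)^q • x0) i := stN_mono N _ _ h2 i
      _ = (1/2:ℝ)^q * st^[N] x0 i := by rw [stN_smul]; simp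
      _ = (1/2:ℝ)^q * u N i := rfl
      _ ≤ (1/2:ℝ)^q * ((1/2) * x0 i) :=
          mul_le_mul_of_nonneg_left (hNle i) (by positivity)
      _ = (1/2:ℝ)^(q+1) * x0 i := by ring
  have hdecay : ∀ (k : ℕ) i, u k i ≤ (1/2:ℝ)^(k/N) * x0 i := by
    intro k i
    have h1 : (k/N)*N ≤ k := Nat.div_mul_le_self k N
    exact le_trans (hanti i h1) (hblock (k/N) i)
  -- choice of c with 1 < c, c^N < 2
  have hNR : (0:ℝ) < (N:ℝ) := by exact_mod_cast hNpos
  have hNR1 : (1:ℝ) ≤ (N:ℝ) := by exact_mod_cast hNpos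
  set δ : ℝ := 1/(2*(N:ℝ)) with hδ
  have hδpos : 0 < δ := by positivity
  have hδle : δ ≤ 1/2 := by
    rw [hδ, div_le_div_iff₀ (by positivity) (by norm_num : (0:ℝ) < 2)]
    linarith
  set c : ℝ := 1 + δ with hc
  have hc1 : 1 < c := by simp only [hc]; linarith
  have hcpos : 0 < c := by linarith
  have hNδ : (N:ℝ)*δ = 1/2 := by
    rw [hδ]
    field_simp
  have hcN2 : c^N < 2 := by
    have hb : (1:ℝ) - (N:ℝ)*δ ≤ (1-δ)^N := by
      have h0 := one_add_mul_le_pow (a := -δ) (by linarith) N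
      calc (1:ℝ) - (N:ℝ)*δ = 1 + (N:ℝ)*(-δ) := by ring
      _ ≤ (1 + -δ)^N := h0
      _ = (1-δ)^N := by ring_nf
    have hhalf : (1/2:ℝ) ≤ (1-δ)^N := by linarith [hb, hNδ]
    have h2 : c^N * (1-δ)^N < 1 := by
      rw [← mul_pow]
      have hmul : c * (1-δ) = 1 - δ^2 := by rw [hc]; ring
      rw [hmul]
      apply pow_lt_one₀ (by nlinarith) (by nlinarith) hNpos.ne'
    nlinarith [pow_pos hcpos N, mul_le_mul_of_nonneg_left hhalf (pow_pos hcpos N).le]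
  set r : ℝ := c^N/2 with hr
  have hr0 : 0 < r := by positivity
  have hr1 : r < 1 := by rw [hr]; linarith
  -- the partial sums of the resolvent-type series
  set P : ℕ → Fin n → ℝ := fun M => ∑ k ∈ Finset.range M, c^k • u k with hP
  have hPapp : ∀ M i, P M i = ∑ k ∈ Finset.range M, c^k * u k i := by
    intro M i
    simp only [hP, Finset.sum_apply, Pi.smul_apply, smul_eq_mul]
  have hPsucc : ∀ M, P (M+1) = P M + c^M • u M := by
    intro M
    simp only [hP]
    rw [Finset.sum_range_succ]
  have hPK : ∀ M, P M ∈ K := by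
    intro M
    induction M with
    | zero =>
      have h0 : P 0 = (0 : Fin n → ℝ) := by simp only [hP, Finset.range_zero,
        Finset.sum_empty]
      rw [h0]
      simpa using hKsmul 0 le_rfl x0 hx0K
    | succ M ih =>
      rw [hPsucc]
      exact hKadd _ ih _ (hKsmul _ (by positivity) _ (huK M))
  have hPmono : ∀ i, Monotone fun M => P M i := by
    intro i
    apply monotone_nat_of_le_succ
    intro M
    rw [hPapp, hPapp, Finset.sum_range_succ]
    have : 0 ≤ c^M * u M i := mul_nonneg (by positivity) (hunn M i)
    linarith
  have hPbound : ∀ M i, P M i ≤ (c^N * ((N:ℝ) * (1-r)⁻¹)) * x0 i := by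
    intro M i
    have hterm : ∀ k, c^k * u k i ≤ c^N * (r^(k/N) * x0 i) := by
      intro k
      have h1 : c^k ≤ c^N * (c^N)^(k/N) := by
        have hk : k ≤ (k/N + 1)*N := (nat_lt_div_succ_mul k N hNpos).le
        calc c^k ≤ c^((k/N+1)*N) := pow_le_pow_right₀ hc1.le hk
        _ = (c^N)^(k/N+1) := by rw [← pow_mul, mul_comm]
        _ = c^N * (c^N)^(k/N) := by rw [pow_succ]; ring
      have h2 : u k i ≤ (1/2:ℝ)^(k/N) * x0 i := hdecay k i
      have h3 : (c^N)^(k/N) * ((1/2:ℝ)^(k/N) * x0 i) = r^(k/N) * x0 i := by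
        rw [hr, div_eq_mul_inv, mul_pow]
        norm_num
        ring
      calc c^k * u k i ≤ (c^N * (c^N)^(k/N)) * ((1/2:ℝ)^(k/N) * x0 i) := by
            apply mul_le_mul h1 h2 (hunn k i)
            positivity
      _ = c^N * ((c^N)^(k/N) * ((1/2:ℝ)^(k/N) * x0 i)) := by ring
      _ = c^N * (r^(k/N) * x0 i) := by rw [h3]
    calc P M i = ∑ k ∈ Finset.range M, c^k * u k i := hPapp M i
    _ ≤ ∑ k ∈ Finset.range M, c^N * (r^(k/N) * x0 i) :=
        Finset.sum_le_sum fun k _ => hterm k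
    _ = c^N * ((∑ k ∈ Finset.range M, r^(k/N)) * x0 i) := by
        rw [Finset.sum_mul, Finset.mul_sum]
    _ ≤ c^N * (((N:ℝ) * (1-r)⁻¹) * x0 i) := by
        apply mul_le_mul_of_nonneg_left _ (by positivity)
        exact mul_le_mul_of_nonneg_right (grouped_geom_bound r hr0.le hr1 N M hNpos)
          (hKpos x0 hx0K i)
    _ = (c^N * ((N:ℝ) * (1-r)⁻¹)) * x0 i := by ring
  set yb : Fin n → ℝ := fun i => ⨆ M, P M i with hyb
  have hybdd : ∀ i, BddAbove (Set.range fun M => P M i) := by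
    intro i
    refine ⟨(c^N * ((N:ℝ) * (1-r)⁻¹)) * x0 i, ?_⟩
    rintro a ⟨M, rfl⟩
    exact hPbound M i
  have hyten : ∀ i, Tendsto (fun M => P M i) atTop (nhds (yb i)) := fun i =>
    tendsto_atTop_ciSup (hPmono i) (hybdd i)
  have hybK : yb ∈ K :=
    hKcl.mem_of_tendsto (tendsto_pi_nhds.2 hyten) (Eventually.of_forall hPK)
  have hybge : ∀ i, x0 i ≤ yb i := by
    intro i
    have h1 : P 1 i = x0 i := by
      rw [hPapp]
      simp [hu0]
    calc x0 i = P 1 i := h1.symm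
    _ ≤ yb i := le_ciSup (hybdd i) 1
  have hybne : yb ≠ 0 := by
    intro hcon
    obtain ⟨i, hi⟩ := exists_pos_coord (hKpos x0 hx0K) hx0ne
    have h1 := hybge i
    rw [hcon] at h1
    simp only [Pi.zero_apply] at h1
    linarith
  -- the recursion A yb = (tstar/c) (yb - x0)
  have hAPM : ∀ M i, A.mulVec (P M) i = (tstar/c) * (P (M+1) i - x0 i) := by
    intro M i
    have hmv : A.mulVec (P M) = ∑ k ∈ Finset.range M, c^k • (A.mulVec (u k)) := by
      simp only [hP]
      rw [← Matrix.mulVecLin_apply, map_sum]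
      congr 1
      funext k
      rw [LinearMap.map_smul, Matrix.mulVecLin_apply]
    have hterm : ∀ k, A.mulVec (u k) = tstar • u (k+1) := by
      intro k
      rw [husucc k, smul_smul]
      rw [mul_inv_cancel₀ htpos.ne', one_smul]
    have h1 : A.mulVec (P M) i = ∑ k ∈ Finset.range M, c^k * (tstar * u (k+1) i) := by
      rw [hmv, Finset.sum_apply]
      congr 1
      funext k
      rw [hterm k]
      simp [Pi.smul_apply]
    have h2 : P (M+1) i - x0 i = ∑ k ∈ Finset.range M, c^(k+1) * u (k+1) i := by
      rw [hPapp, Finset.sum_range_succ']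
      simp [hu0]
    rw [h1, h2, Finset.mul_sum]
    congr 1
    funext k
    have hcne : c ≠ 0 := hcpos.ne'
    field_simp
    ring
  have hAyb : ∀ i, A.mulVec yb i = (tstar/c) * (yb i - x0 i) := by
    intro i
    have h1 : Tendsto (fun M => A.mulVec (P M) i) atTop (nhds (A.mulVec yb i)) :=
      tendsto_mulVec_coord A hyten i
    have h3 : Tendsto (fun M => (tstar/c) * (P (M+1) i - x0 i)) atTop
        (nhds ((tstar/c) * (yb i - x0 i))) := by
      have := (((hyten i).comp (tendsto_add_atTop_nat 1)).sub_const (x0 i)).const_mul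
        (tstar/c)
      simpa [Function.comp] using this
    have h2 : Tendsto (fun M => A.mulVec (P M) i) atTop
        (nhds ((tstar/c) * (yb i - x0 i))) := by
      simp only [hAPM]
      exact h3
    exact tendsto_nhds_unique h1 h2
  have hAyble : ∀ i, A.mulVec yb i ≤ (tstar/c) * yb i := by
    intro i
    rw [hAyb i]
    have h1 : 0 ≤ tstar/c := by positivity
    have h2 : 0 ≤ x0 i := hKpos x0 hx0K i
    nlinarith
  have hge : tstar ≤ tstar/c := hlow (tstar/c) (by positivity) yb hybK hybne hAyble
  have hlt : tstar/c < tstar := div_lt_self htpos hc1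
  linarith

lemma cone_eig (hA : ∀ i j, 0 ≤ A i j)
    (hKpos : ∀ x ∈ K, ∀ i, 0 ≤ x i)
    (hKcl : IsClosed K)
    (hKadd : ∀ x ∈ K, ∀ y ∈ K, x + y ∈ K)
    (hKsmul : ∀ c : ℝ, 0 ≤ c → ∀ x ∈ K, c • x ∈ K)
    (hKA : ∀ x ∈ K, A.mulVec x ∈ K)
    (y : Fin n → ℝ) (hy : y ∈ K) (hy0 : y ≠ 0) :
    ∃ μ : ℝ, 0 ≤ μ ∧ ∃ v, v ∈ K ∧ v ≠ 0 ∧ A.mulVec v = μ • v := by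
  classical
  set σ : (Fin n → ℝ) → ℝ := fun x => ∑ i, x i with hσ
  have hσpos : ∀ x ∈ K, x ≠ 0 → 0 < σ x := by
    intro x hx hx0
    obtain ⟨i, hi⟩ := exists_pos_coord (hKpos x hx) hx0
    exact Finset.sum_pos' (fun j _ => hKpos x hx j) ⟨i, Finset.mem_univ i, hi⟩
  -- normalization helper
  have hnorm : ∀ (t : ℝ) (x : Fin n → ℝ), x ∈ K → x ≠ 0 →
      (∀ i, A.mulVec x i ≤ t * x i) →
      ∃ x', (x' ∈ K ∧ σ x' = 1) ∧ ∀ i, A.mulVec x' i ≤ t * x' i := by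
    intro t x hxK hx0 hle
    have hsp := hσpos x hxK hx0
    refine ⟨(σ x)⁻¹ • x, ⟨hKsmul _ (inv_nonneg.2 hsp.le) x hxK, ?_⟩, ?_⟩
    · show (∑ i, ((σ x)⁻¹ • x) i) = 1
      simp only [Pi.smul_apply, smul_eq_mul]
      rw [← Finset.mul_sum]
      exact inv_mul_cancel₀ hsp.ne'
    · intro i
      rw [Matrix.mulVec_smul]
      simp only [Pi.smul_apply, smul_eq_mul]
      calc (σ x)⁻¹ * A.mulVec x i ≤ (σ x)⁻¹ * (t * x i) :=
            mul_le_mul_of_nonneg_left (hle i) (inv_nonneg.2 hsp.le)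
      _ = t * ((σ x)⁻¹ * x i) := by ring
  -- Step 1 : element of maximal support
  set F : (Fin n → ℝ) → ℕ := fun x => (Finset.univ.filter fun i => 0 < x i).card with hF
  have hFbdd : BddAbove (F '' K) := by
    refine ⟨n, ?_⟩
    rintro m ⟨z, _, rfl⟩
    calc F z ≤ (Finset.univ : Finset (Fin n)).card := Finset.card_filter_le _ _
    _ = n := by simp
  have hmem : sSup (F '' K) ∈ F '' K := Nat.sSup_mem ⟨F y, y, hy, rfl⟩ hFbdd
  obtain ⟨xb, hxbK, hxbF⟩ := hmem
  have hmax : ∀ z ∈ K, ∀ i, xb i = 0 → z i = 0 := by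
    intro z hz i hxi
    by_contra hzi
    have hzipos : 0 < z i := lt_of_le_of_ne (hKpos z hz i) (Ne.symm hzi)
    have hwK : xb + z ∈ K := hKadd xb hxbK z hz
    have hsub : (Finset.univ.filter fun j => 0 < xb j) ⊂
        (Finset.univ.filter fun j => 0 < (xb + z) j) := by
      constructor
      · intro j hj
        simp only [Finset.mem_filter, Finset.mem_univ, true_and] at hj ⊢
        have := hKpos z hz j
        simpa using add_pos_of_pos_of_nonneg hj this
      · intro hcon
        have hi : i ∈ (Finset.univ.filter fun j => 0 < (xb + z) j) := by
          simp only [Finset.mem_filter, Finset.mem_univ, true_and]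
          simpa [hxi] using hzipos
        have := hcon hi
        simp only [Finset.mem_filter, Finset.mem_univ, true_and] at this
        rw [hxi] at this
        exact lt_irrefl 0 this
    have hlt : F xb < F (xb + z) := Finset.card_lt_card hsub
    have hle : F (xb + z) ≤ sSup (F '' K) := le_csSup hFbdd ⟨xb + z, hwK, rfl⟩
    rw [hxbF] at hlt
    omega
  have hxb0 : xb ≠ 0 := by
    intro hcon
    apply hy0
    funext i
    refine hmax y hy i ?_
    rw [hcon]
    rfl
  -- Step 2 : a super-eigenvalue exists
  have hT : ∃ t : ℝ, 0 ≤ t ∧ ∃ x, (x ∈ K ∧ σ x = 1) ∧ ∀ i, A.mulVec x i ≤ t * x i := by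
    set tb : ℝ := ∑ i, (if 0 < xb i then A.mulVec xb i / xb i else 0) with htb
    have htermnn : ∀ i, 0 ≤ (if 0 < xb i then A.mulVec xb i / xb i else 0) := by
      intro i
      split
      · exact div_nonneg (mulVec_nonneg A hA (hKpos xb hxbK) i) (hKpos xb hxbK i)
      · exact le_rfl
    have htb0 : 0 ≤ tb := Finset.sum_nonneg fun i _ => htermnn i
    have hle : ∀ i, A.mulVec xb i ≤ tb * xb i := by
      intro i
      rcases (hKpos xb hxbK i).eq_or_lt with hz | hpos
      · have h0 : A.mulVec xb i = 0 := hmax _ (hKA xb hxbK) i hz.symm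
        rw [h0, ← hz]
        simp
      · have hsingle : A.mulVec xb i / xb i ≤ tb := by
          have h5 := Finset.single_le_sum
            (f := fun i => (if 0 < xb i then A.mulVec xb i / xb i else 0))
            (fun j _ => htermnn j) (Finset.mem_univ i)
          have h6 : (if 0 < xb i then A.mulVec xb i / xb i else 0) ≤ tb := by
            simpa using h5
          rwa [if_pos hpos] at h6
        calc A.mulVec xb i = (A.mulVec xb i / xb i) * xb i := by field_simp
        _ ≤ tb * xb i := mul_le_mul_of_nonneg_right hsingle hpos.le
    obtain ⟨x', hx', hx'le⟩ := hnorm tb xb hxbK hxb0 hle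
    exact ⟨tb, htb0, x', hx', hx'le⟩
  -- Step 3: the infimum
  set T : Set ℝ := {t : ℝ | 0 ≤ t ∧ ∃ x, (x ∈ K ∧ σ x = 1) ∧ ∀ i, A.mulVec x i ≤ t * x i}
    with hTdef
  have hTne : T.Nonempty := by
    obtain ⟨t, ht0, hx⟩ := hT
    exact ⟨t, ht0, hx⟩
  have hTbdd : BddBelow T := ⟨0, fun t ht => ht.1⟩
  set tstar : ℝ := sInf T with htstar
  have htstar0 : 0 ≤ tstar := le_csInf hTne fun t ht => ht.1
  -- Step 4 : compactness to find minimizing x*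
  have hσcont : Continuous σ := continuous_finset_sum _ fun i _ => continuous_apply i
  have hCclosed : IsClosed {x | x ∈ K ∧ σ x = 1} := by
    have h0 : {x : Fin n → ℝ | x ∈ K ∧ σ x = 1} = K ∩ σ ⁻¹' {1} := by
      ext x
      simp [Set.mem_inter_iff]
    rw [h0]
    exact hKcl.inter (isClosed_singleton.preimage hσcont)
  have hCcomp : IsCompact {x | x ∈ K ∧ σ x = 1} := by
    rw [Metric.isCompact_iff_isClosed_bounded]
    refine ⟨hCclosed, ?_⟩
    rw [isBounded_iff_forall_norm_le]
    refine ⟨1, ?_⟩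
    intro x hx
    rw [pi_norm_le_iff_of_nonneg zero_le_one]
    intro i
    rw [Real.norm_eq_abs, abs_le]
    constructor
    · linarith [hKpos x hx.1 i]
    · calc x i ≤ σ x := Finset.single_le_sum (fun j _ => hKpos x hx.1 j) (Finset.mem_univ i)
      _ = 1 := hx.2
  have hseq : ∀ k : ℕ, ∃ x, (x ∈ K ∧ σ x = 1) ∧
      ∀ i, A.mulVec x i ≤ (tstar + ((k:ℝ)+1)⁻¹) * x i := by
    intro k
    have hlt : sInf T < tstar + ((k:ℝ)+1)⁻¹ := by
      have : (0:ℝ) < ((k:ℝ)+1)⁻¹ := by positivity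
      rw [← htstar]
      linarith
    obtain ⟨t, htT, htlt⟩ := exists_lt_of_csInf_lt hTne hlt
    obtain ⟨ht0, x, hx, hxt⟩ := htT
    exact ⟨x, hx, fun i =>
      (hxt i).trans (mul_le_mul_of_nonneg_right htlt.le (hKpos x hx.1 i))⟩
  choose xs hxs1 hxs2 using hseq
  obtain ⟨xstar, hxstarC, φ, hφ, hφt⟩ := hCcomp.tendsto_subseq hxs1
  have hcoord : ∀ j, Tendsto (fun k => xs (φ k) j) atTop (nhds (xstar j)) := by
    intro j
    exact (tendsto_pi_nhds.1 hφt) j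
  have hxstar : ∀ i, A.mulVec xstar i ≤ tstar * xstar i := by
    intro i
    have h1 : Tendsto (fun k => A.mulVec (xs (φ k)) i) atTop (nhds (A.mulVec xstar i)) :=
      tendsto_mulVec_coord A hcoord i
    have hz : Tendsto (fun k : ℕ => ((φ k : ℝ)+1)⁻¹) atTop (nhds 0) := by
      have h0 : Tendsto (fun m : ℕ => ((m:ℝ)+1)⁻¹) atTop (nhds 0) := by
        simpa [one_div] using tendsto_one_div_add_atTop_nhds_zero_nat (𝕜 := ℝ)
      exact h0.comp hφ.tendsto_atTop
    have h2 : Tendsto (fun k => (tstar + ((φ k : ℝ)+1)⁻¹) * xs (φ k) i) atTop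
        (nhds (tstar * xstar i)) := by
      have h4 := ((tendsto_const_nhds : Tendsto (fun _ : ℕ => tstar) atTop (nhds tstar)).add
        hz).mul (hcoord i)
      simpa using h4
    exact le_of_tendsto_of_tendsto' h1 h2 fun k => hxs2 (φ k) i
  have hxstarK : xstar ∈ K := hxstarC.1
  have hxstarσ : σ xstar = 1 := hxstarC.2
  have hxstar0 : xstar ≠ 0 := by
    intro hcon
    rw [hcon] at hxstarσ
    simp [hσ] at hxstarσ
  -- Step 5 : case tstar = 0
  rcases htstar0.eq_or_lt with h0 | htpos
  · refine ⟨0, le_rfl, xstar, hxstarK, hxstar0, ?_⟩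
    funext i
    have h1 : A.mulVec xstar i ≤ 0 := by
      have h2 := hxstar i
      rw [← h0] at h2
      simpa using h2
    have h2 : 0 ≤ A.mulVec xstar i := mulVec_nonneg A hA (hKpos xstar hxstarK) i
    simp only [Pi.smul_apply, zero_smul]
    linarith
  -- Step 6 : iterate
  set st : (Fin n → ℝ) → (Fin n → ℝ) := fun x => tstar⁻¹ • A.mulVec x with hst
  set u : ℕ → Fin n → ℝ := fun k => st^[k] xstar with hu
  have hu0 : u 0 = xstar := rfl
  have husucc : ∀ k, u (k+1) = tstar⁻¹ • A.mulVec (u k) := by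
    intro k
    show st^[k+1] xstar = _
    rw [Function.iterate_succ_apply']
  have htinv : 0 ≤ tstar⁻¹ := inv_nonneg.2 htpos.le
  have huK : ∀ k, u k ∈ K := by
    intro k
    induction k with
    | zero => exact hxstarK
    | succ k ih =>
      rw [husucc]
      exact hKsmul _ htinv _ (hKA _ ih)
  have hunn : ∀ k i, 0 ≤ u k i := fun k => hKpos _ (huK k)
  have humono : ∀ k i, u (k+1) i ≤ u k i := by
    intro k
    induction k with
    | zero =>
      intro i
      rw [husucc 0, hu0]
      simp only [Pi.smul_apply, smul_eq_mul]
      calc tstar⁻¹ * A.mulVec xstar i ≤ tstar⁻¹ * (tstar * xstar i) :=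
            mul_le_mul_of_nonneg_left (hxstar i) htinv
      _ = xstar i := by field_simp
    | succ k ih =>
      intro i
      have h1 : A.mulVec (u (k+1)) i ≤ A.mulVec (u k) i := mulVec_mono A hA ih i
      have h2 := mul_le_mul_of_nonneg_left h1 htinv
      calc u (k+2) i = tstar⁻¹ * A.mulVec (u (k+1)) i := by
            rw [husucc (k+1)]; simp
      _ ≤ tstar⁻¹ * A.mulVec (u k) i := h2
      _ = u (k+1) i := by rw [husucc k]; simp
  have hanti : ∀ i, Antitone fun k => u k i := fun i =>
    antitone_nat_of_succ_le fun k => humono k i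
  set v : Fin n → ℝ := fun i => ⨅ k, u k i with hv
  have hvten : ∀ i, Tendsto (fun k => u k i) atTop (nhds (v i)) := by
    intro i
    exact tendsto_atTop_ciInf (hanti i) ⟨0, by rintro a ⟨k, rfl⟩; exact hunn k i⟩
  have hvten' : Tendsto u atTop (nhds v) := tendsto_pi_nhds.2 hvten
  have hvK : v ∈ K := hKcl.mem_of_tendsto hvten' (Eventually.of_forall huK)
  have hAv : A.mulVec v = tstar • v := by
    funext i
    have h1 : Tendsto (fun k => A.mulVec (u k) i) atTop (nhds (A.mulVec v i)) :=
      tendsto_mulVec_coord A hvten i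
    have heq : ∀ k, A.mulVec (u k) i = tstar * u (k+1) i := by
      intro k
      rw [husucc k]
      simp only [Pi.smul_apply, smul_eq_mul]
      field_simp
    have h2 : Tendsto (fun k => A.mulVec (u k) i) atTop (nhds (tstar * v i)) := by
      simp only [heq]
      have := ((hvten i).comp (tendsto_add_atTop_nat 1)).const_mul tstar
      simpa [Function.comp] using this
    have h3 := tendsto_nhds_unique h1 h2
    simpa [Pi.smul_apply] using h3
  by_cases hv0 : v = 0
  swap
  · exact ⟨tstar, htpos.le, v, hvK, hv0, hAv⟩
  -- Step 7 : contradiction when v = 0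
  exfalso
  have hzero : ∀ i, Tendsto (fun k => st^[k] xstar i) atTop (nhds 0) := by
    intro i
    have h1 := hvten i
    rw [hv0] at h1
    simpa using h1
  have hlow : ∀ t : ℝ, 0 ≤ t → ∀ x ∈ K, x ≠ 0 →
      (∀ i, A.mulVec x i ≤ t * x i) → tstar ≤ t := by
    intro t ht0 x hxK hx0 hle
    obtain ⟨x', hx', hx'le⟩ := hnorm t x hxK hx0 hle
    exact csInf_le hTbdd ⟨ht0, x', hx', hx'le⟩
  exact iterate_no_decay A K hA hKpos hKcl hKadd hKsmul hKA tstar htpos xstar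
    hxstarK hxstar0 hxstar hzero hlow

end Cone


lemma pow_entry_nonneg (A : Matrix (Fin n) (Fin n) ℝ) (hA : ∀ i j, 0 ≤ A i j) :
    ∀ (k : ℕ) i j, 0 ≤ (A ^ k) i j := by
  intro k
  induction k with
  | zero =>
    intro i j
    simp only [pow_zero, Matrix.one_apply]
    split <;> norm_num
  | succ k ih =>
    intro i j
    rw [pow_succ, Matrix.mul_apply]
    exact Finset.sum_nonneg fun l _ => mul_nonneg (ih i l) (hA l j)

lemma pow_mulVec_eig (A : Matrix (Fin n) (Fin n) ℝ) {x : Fin n → ℝ} {μ : ℝ}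
    (h : A.mulVec x = μ • x) : ∀ k, (A ^ k).mulVec x = μ ^ k • x := by
  intro k
  induction k with
  | zero => simp
  | succ k ih =>
    rw [pow_succ, ← Matrix.mulVec_mulVec, h, Matrix.mulVec_smul, ih, smul_smul, pow_succ]
    ring_nf

lemma le_of_pow_le_pow' (μ s C : ℝ) (hs : 0 < s)
    (h : ∀ k : ℕ, μ ^ k ≤ C * s ^ k) : μ ≤ s := by
  by_contra hlt
  push_neg at hlt
  have h1 : (1:ℝ) < μ / s := (one_lt_div hs).2 hlt
  have h2 := tendsto_pow_atTop_atTop_of_one_lt h1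
  obtain ⟨k, hk⟩ := (h2.eventually_ge_atTop (C + 1)).exists
  have hk' : μ ^ k ≤ C * s ^ k := h k
  have hspos : (0:ℝ) < s ^ k := pow_pos hs k
  have : (μ / s) ^ k ≤ C := by
    rw [div_pow, div_le_iff₀ hspos]
    linarith
  linarith

lemma entry_le_matNorm (hn : 0 < n) (M : Matrix (Fin n) (Fin n) ℝ) (i j : Fin n) :
    M i j ≤ matNorm M := by
  have : Nonempty (Fin n) := ⟨⟨0, hn⟩⟩
  calc M i j ≤ ⨆ j', M i j' := le_ciSup (Finite.bddAbove_range _) j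
  _ ≤ ⨆ i', ⨆ j', M i' j' :=
        le_ciSup (f := fun i' => ⨆ j', M i' j') (Finite.bddAbove_range _) i
  _ = matNorm M := rfl

lemma matNorm_nonneg (hn : 0 < n) (M : Matrix (Fin n) (Fin n) ℝ)
    (hM : ∀ i j, 0 ≤ M i j) : 0 ≤ matNorm M := by
  have hi : Fin n := ⟨0, hn⟩
  exact le_trans (hM hi hi) (entry_le_matNorm hn M hi hi)

lemma growth (hn : 0 < n) (A : Matrix (Fin n) (Fin n) ℝ) (hA : ∀ i j, 0 ≤ A i j)
    {s : ℝ} (hs : specRad A < s) (hs0 : 0 < s) :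
    ∃ C : ℝ, 0 < C ∧ ∀ (k : ℕ) (i j : Fin n), (A ^ k) i j ≤ C * s ^ k := by
  classical
  have hnn : ∀ k : ℕ, 0 ≤ matNorm (A ^ k) := fun k =>
    matNorm_nonneg hn _ (fun i j => pow_entry_nonneg A hA k i j)
  have hA0 : 0 ≤ matNorm A := matNorm_nonneg hn A hA
  set b : ℝ := (n:ℝ) * matNorm A + 1 with hbdef
  have hb1 : 1 ≤ b := by
    have : (0:ℝ) ≤ (n:ℝ) * matNorm A := by positivity
    rw [hbdef]; linarith
  have hb0 : 0 ≤ b := by linarith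
  have hup : ∀ k : ℕ, matNorm (A ^ k) ≤ b ^ k := by
    intro k
    induction k with
    | zero =>
      simp only [pow_zero]
      apply Real.iSup_le _ zero_le_one
      intro i
      apply Real.iSup_le _ zero_le_one
      intro j
      simp only [Matrix.one_apply]
      split <;> norm_num
    | succ k ih =>
      have hstep : ∀ i j, (A ^ (k+1)) i j ≤ b ^ k * ((n:ℝ) * matNorm A) := by
        intro i j
        rw [pow_succ, Matrix.mul_apply]
        calc ∑ l, (A ^ k) i l * A l j
            ≤ ∑ _l : Fin n, matNorm (A ^ k) * matNorm A := by
              apply Finset.sum_le_sum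
              intro l _
              apply mul_le_mul (entry_le_matNorm hn _ i l) (entry_le_matNorm hn _ l j)
                (hA l j) (le_trans (pow_entry_nonneg A hA k i l) (entry_le_matNorm hn _ i l))
        _ = (n:ℝ) * (matNorm (A ^ k) * matNorm A) := by
              rw [Finset.sum_const, Finset.card_univ, Fintype.card_fin, nsmul_eq_mul]
        _ ≤ (n:ℝ) * (b ^ k * matNorm A) := by
              apply mul_le_mul_of_nonneg_left _ (by positivity)
              exact mul_le_mul_of_nonneg_right ih hA0
        _ = b ^ k * ((n:ℝ) * matNorm A) := by ring
      have h2 : matNorm (A ^ (k+1)) ≤ b ^ k * ((n:ℝ) * matNorm A) := by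
        have hbn : 0 ≤ b ^ k * ((n:ℝ) * matNorm A) := by positivity
        apply Real.iSup_le _ hbn
        intro i
        exact Real.iSup_le (fun j => hstep i j) hbn
      calc matNorm (A ^ (k+1)) ≤ b ^ k * ((n:ℝ) * matNorm A) := h2
      _ ≤ b ^ (k+1) := by
          rw [pow_succ]
          apply mul_le_mul_of_nonneg_left _ (by positivity)
          rw [hbdef]; linarith
  have hbdd : IsBoundedUnder (· ≤ ·) atTop
      (fun k : ℕ => (matNorm (A ^ k)) ^ ((k:ℝ)⁻¹)) := by
    apply isBoundedUnder_of
    refine ⟨b, ?_⟩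
    intro k
    rcases Nat.eq_zero_or_pos k with hk0 | hk0
    · subst hk0
      simp only [Nat.cast_zero, inv_zero, Real.rpow_zero]
      exact hb1
    · calc (matNorm (A ^ k)) ^ ((k:ℝ)⁻¹) ≤ (b ^ k) ^ ((k:ℝ)⁻¹) :=
            Real.rpow_le_rpow (hnn k) (hup k) (by positivity)
      _ = b := Real.pow_rpow_inv_natCast hb0 hk0.ne'
  have hev : ∀ᶠ k : ℕ in atTop, (matNorm (A ^ k)) ^ ((k:ℝ)⁻¹) < s :=
    eventually_lt_of_limsup_lt hs hbdd
  obtain ⟨K0, hK0⟩ := eventually_atTop.1 (hev.and (eventually_ge_atTop 1))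
  set C : ℝ := 1 + ∑ k ∈ Finset.range K0, matNorm (A ^ k) / s ^ k with hCdef
  have hterm : ∀ k ∈ Finset.range K0, 0 ≤ matNorm (A ^ k) / s ^ k := fun k _ =>
    div_nonneg (hnn k) (pow_nonneg hs0.le k)
  have hsumnn : 0 ≤ ∑ k ∈ Finset.range K0, matNorm (A ^ k) / s ^ k :=
    Finset.sum_nonneg hterm
  have hCpos : 0 < C := by rw [hCdef]; linarith
  have hC1 : 1 ≤ C := by rw [hCdef]; linarith
  refine ⟨C, hCpos, ?_⟩
  intro k i j
  have hkey : matNorm (A ^ k) ≤ C * s ^ k := by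
    by_cases hk : k < K0
    · have h1 : matNorm (A^k)/s^k ≤ ∑ m ∈ Finset.range K0, matNorm (A ^ m) / s ^ m :=
        Finset.single_le_sum hterm (Finset.mem_range.2 hk)
      have h2 : matNorm (A^k)/s^k ≤ C := by rw [hCdef]; linarith
      have hsk : (0:ℝ) < s ^ k := pow_pos hs0 k
      calc matNorm (A^k) = (matNorm (A^k)/s^k)*s^k := by field_simp
      _ ≤ C * s^k := mul_le_mul_of_nonneg_right h2 hsk.le
    · push_neg at hk
      obtain ⟨hlt, hk1⟩ := hK0 k hk
      have hkne : k ≠ 0 := by omega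
      have h3 : matNorm (A^k) < s^k := by
        have h4 := Real.rpow_inv_natCast_pow (hnn k) hkne
        calc matNorm (A^k) = ((matNorm (A^k)) ^ ((k:ℝ)⁻¹))^k := h4.symm
        _ < s^k := by
            apply pow_lt_pow_left₀ hlt (Real.rpow_nonneg (hnn k) _) hkne
      calc matNorm (A^k) ≤ s^k := h3.le
      _ ≤ C * s^k := le_mul_of_one_le_left (pow_nonneg hs0.le k) hC1
  exact le_trans (entry_le_matNorm hn _ i j) hkey

lemma extract (hn : 0 < n) (A : Matrix (Fin n) (Fin n) ℝ) (hA : ∀ i j, 0 ≤ A i j)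
    (f : ℕ → ℝ)
    (hrad : ENNReal.ofReal (specRad A) <
      Filter.atTop.liminf fun j : ℕ => (ENNReal.ofReal |f j|) ^ (-(j : ℝ)⁻¹)) :
    ∃ s t C : ℝ, 0 < s ∧ s < t ∧ 0 < C ∧
      (∀ (k : ℕ) (i j : Fin n), (A ^ k) i j ≤ C * s ^ k) ∧
      (∀ᶠ k in atTop, |f k| ≤ (t⁻¹) ^ k) := by
  obtain ⟨q, hq1, hq2⟩ := exists_between hrad
  have hqtop : q ≠ ⊤ := (hq2.trans_le le_top).ne
  have hq0 : 0 < q := lt_of_le_of_lt zero_le hq1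
  set t := q.toReal with ht
  have ht0 : 0 < t := ENNReal.toReal_pos hq0.ne' hqtop
  have hqt : q = ENNReal.ofReal t := (ENNReal.ofReal_toReal hqtop).symm
  have hrt : specRad A < t := by
    rcases le_or_gt (specRad A) 0 with h | h
    · linarith
    · have h5 := hq1
      rw [hqt] at h5
      exact (ENNReal.ofReal_lt_ofReal_iff ht0).1 h5
  set s := (max (specRad A) 0 + t)/2 with hs
  have hmaxlt : max (specRad A) 0 < t := max_lt hrt ht0
  have hs0 : 0 < s := by
    have := le_max_right (specRad A) 0
    rw [hs]; linarith
  have hss : specRad A < s := by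
    have := le_max_left (specRad A) 0
    rw [hs]; linarith
  have hst : s < t := by rw [hs]; linarith
  obtain ⟨C, hC, hAk⟩ := growth hn A hA hss hs0
  refine ⟨s, t, C, hs0, hst, hC, hAk, ?_⟩
  have hev := eventually_lt_of_lt_liminf hq2
  filter_upwards [hev, eventually_ge_atTop 1] with j hj hj1
  set a := ENNReal.ofReal |f j| with ha
  have hj0 : (j:ℝ) ≠ 0 := Nat.cast_ne_zero.2 (by omega)
  have h1 : q < (a ^ ((j:ℝ)⁻¹))⁻¹ := by
    rw [← ENNReal.rpow_neg]
    exact hj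
  have h2 : a ^ ((j:ℝ)⁻¹) < q⁻¹ := ENNReal.lt_inv_iff_lt_inv.1 h1
  have h3 : a ≤ (q⁻¹) ^ j := by
    have h4 : (a ^ ((j:ℝ)⁻¹)) ^ j ≤ (q⁻¹) ^ j := pow_le_pow_left₀ zero_le h2.le j
    calc a = (a ^ ((j:ℝ)⁻¹)) ^ (j:ℕ) := by
          rw [← ENNReal.rpow_natCast (a ^ ((j:ℝ)⁻¹)) j, ← ENNReal.rpow_mul,
            inv_mul_cancel₀ hj0, ENNReal.rpow_one]
    _ ≤ (q⁻¹)^j := h4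
  have h5 : ((q⁻¹)^j) ≠ ⊤ := by
    apply ENNReal.pow_ne_top
    simp [hq0.ne']
  have h6 := ENNReal.toReal_mono h5 h3
  rw [ha, ENNReal.toReal_ofReal (abs_nonneg _)] at h6
  rwa [ENNReal.toReal_pow, ENNReal.toReal_inv] at h6

section Series

variable (A : Matrix (Fin n) (Fin n) ℝ) (f : ℕ → ℝ) {s t C : ℝ}

lemma summable_entry (hA : ∀ i j, 0 ≤ A i j) (hs0 : 0 < s) (hst : s < t) (hC : 0 < C)
    (hAk : ∀ (k : ℕ) (i j : Fin n), (A ^ k) i j ≤ C * s ^ k)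
    (hf : ∀ᶠ k in atTop, |f k| ≤ (t⁻¹) ^ k) (i j : Fin n) :
    Summable (fun k => f k * (A ^ k) i j) := by
  have ht0 : 0 < t := hs0.trans hst
  have hr0 : 0 ≤ s/t := by positivity
  have hr1 : s/t < 1 := (div_lt_one ht0).2 hst
  apply Summable.of_norm_bounded_eventually (g := fun k => C * (s/t)^k)
    ((summable_geometric_of_lt_one hr0 hr1).mul_left C)
  rw [Nat.cofinite_eq_atTop]
  filter_upwards [hf] with k hk
  have hnn : 0 ≤ (A ^ k) i j := pow_entry_nonneg A hA k i j
  have h1 : ‖f k * (A ^ k) i j‖ = |f k| * (A ^ k) i j := by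
    rw [norm_mul, Real.norm_eq_abs, Real.norm_eq_abs, abs_of_nonneg hnn]
  rw [h1]
  calc |f k| * (A ^ k) i j ≤ (t⁻¹)^k * (C * s^k) := by
        apply mul_le_mul hk (hAk k i j) hnn (by positivity)
  _ = C * (s/t)^k := by
        rw [div_pow, div_eq_mul_inv, ← inv_pow]
        ring

lemma summable_coef (hs0 : 0 < s) (hst : s < t)
    (hf : ∀ᶠ k in atTop, |f k| ≤ (t⁻¹) ^ k) {μ : ℝ} (hμ0 : 0 ≤ μ) (hμs : μ ≤ s) :
    Summable (fun k => f k * μ ^ k) := by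
  have ht0 : 0 < t := hs0.trans hst
  have hr0 : 0 ≤ s/t := by positivity
  have hr1 : s/t < 1 := (div_lt_one ht0).2 hst
  apply Summable.of_norm_bounded_eventually (g := fun k => (s/t)^k)
    (summable_geometric_of_lt_one hr0 hr1)
  rw [Nat.cofinite_eq_atTop]
  filter_upwards [hf] with k hk
  have h1 : ‖f k * μ ^ k‖ = |f k| * μ ^ k := by
    rw [norm_mul, Real.norm_eq_abs, Real.norm_eq_abs, abs_of_nonneg (pow_nonneg hμ0 k)]
  rw [h1]
  calc |f k| * μ ^ k ≤ (t⁻¹)^k * s^k := by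
        apply mul_le_mul hk (pow_le_pow_left₀ hμ0 hμs k) (pow_nonneg hμ0 k) (by positivity)
  _ = (s/t)^k := by
        rw [div_pow, div_eq_mul_inv, ← inv_pow]
        ring

lemma summable_apply (hA : ∀ i j, 0 ≤ A i j) (hs0 : 0 < s) (hst : s < t) (hC : 0 < C)
    (hAk : ∀ (k : ℕ) (i j : Fin n), (A ^ k) i j ≤ C * s ^ k)
    (hf : ∀ᶠ k in atTop, |f k| ≤ (t⁻¹) ^ k) (z : Fin n → ℝ) (i : Fin n) :
    Summable (fun k => f k * ((A ^ k).mulVec z) i) := by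
  have h2 : Summable fun k => ∑ j, (f k * (A^k) i j) * z j :=
    summable_sum fun j _ => (summable_entry A f hA hs0 hst hC hAk hf i j).mul_right (z j)
  apply h2.congr
  intro k
  simp only [Matrix.mulVec, dotProduct, Finset.mul_sum]
  congr 1
  funext j
  ring

lemma B_entry (hA : ∀ i j, 0 ≤ A i j) (hs0 : 0 < s) (hst : s < t) (hC : 0 < C)
    (hAk : ∀ (k : ℕ) (i j : Fin n), (A ^ k) i j ≤ C * s ^ k)
    (hf : ∀ᶠ k in atTop, |f k| ≤ (t⁻¹) ^ k) (i j : Fin n) :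
    (∑' k : ℕ, f k • A ^ k) i j = ∑' k : ℕ, f k * (A ^ k) i j := by
  have hMat : Summable (fun k => f k • A ^ k) := by
    apply Pi.summable.2
    intro i'
    apply Pi.summable.2
    intro j'
    have := summable_entry A f hA hs0 hst hC hAk hf i' j'
    apply this.congr
    intro k
    simp [Matrix.smul_apply]
  have h1 := Pi.hasSum.1 (Pi.hasSum.1 hMat.hasSum i) j
  have h2 := h1.tsum_eq
  rw [← h2]
  apply tsum_congr
  intro k
  simp [Matrix.smul_apply]

lemma B_mulVec_form (hA : ∀ i j, 0 ≤ A i j) (hs0 : 0 < s) (hst : s < t) (hC : 0 < C)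
    (hAk : ∀ (k : ℕ) (i j : Fin n), (A ^ k) i j ≤ C * s ^ k)
    (hf : ∀ᶠ k in atTop, |f k| ≤ (t⁻¹) ^ k) (z : Fin n → ℝ) (i : Fin n) :
    (∑' k : ℕ, f k • A ^ k).mulVec z i = ∑' k : ℕ, f k * ((A ^ k).mulVec z) i := by
  have hstep1 : (∑' k : ℕ, f k • A ^ k).mulVec z i
      = ∑ j, (∑' k : ℕ, f k * (A ^ k) i j) * z j := by
    simp only [Matrix.mulVec, dotProduct]
    exact Finset.sum_congr rfl fun j _ => by
      rw [B_entry A f hA hs0 hst hC hAk hf i j]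
  rw [hstep1]
  have hstep2 : ∀ j : Fin n, (∑' k : ℕ, f k * (A ^ k) i j) * z j
      = ∑' k : ℕ, f k * (A ^ k) i j * z j := fun j => (tsum_mul_right).symm
  simp only [hstep2]
  rw [← Summable.tsum_finsetSum (fun j _ => (summable_entry A f hA hs0 hst hC hAk hf i j).mul_right (z j))]
  congr 1
  funext k
  simp only [Matrix.mulVec, dotProduct, Finset.mul_sum]
  congr 1
  funext j
  ring

end Series

end Stmt11Aux
/-- spectral mapping theorem for power series and the distinguished
spectrum: if `ρ(A) < R_f` and `f(A) ≥ 0`, then `σ_D(f(A)) = f(σ_D(A))`. -/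

theorem stmt11 {n : ℕ} (A : Matrix (Fin n) (Fin n) ℝ) (hA : ∀ i j, 0 ≤ A i j)
    (f : ℕ → ℝ)
    (hrad : ENNReal.ofReal (specRad A) <
      Filter.atTop.liminf fun j : ℕ => (ENNReal.ofReal |f j|) ^ (-(j : ℝ)⁻¹))
    (hfA : ∀ i j, 0 ≤ (∑' j : ℕ, f j • A ^ j) i j) :
    distSpec (∑' j : ℕ, f j • A ^ j) =
      (fun l : ℝ => ∑' j : ℕ, f j * l ^ j) '' distSpec A := by
  classical
  open Stmt11Aux in
  rcases Nat.eq_zero_or_pos n with hn0 | hn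
  · -- degenerate case n = 0 : both sides are empty
    subst hn0
    ext l
    simp only [Set.mem_image]
    constructor
    · rintro ⟨-, x, -, hxne, -⟩
      exact absurd (funext fun i => i.elim0) hxne
    · rintro ⟨μ, ⟨-, x, -, hxne, -⟩, -⟩
      exact absurd (funext fun i => i.elim0) hxne
  obtain ⟨s, t, C, hs0, hst, hC, hAk, hf⟩ := Stmt11Aux.extract hn A hA f hrad
  set B : Matrix (Fin n) (Fin n) ℝ := ∑' j : ℕ, f j • A ^ j with hB
  -- eigenvalue bound
  have eig_le : ∀ (x : Fin n → ℝ) (μ : ℝ), (∀ i, 0 ≤ x i) → x ≠ 0 → 0 ≤ μ →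
      A.mulVec x = μ • x → μ ≤ s := by
    intro x μ hx hxne hμ0 heig
    obtain ⟨i0, hi0⟩ := Stmt11Aux.exists_pos_coord hx hxne
    set S : ℝ := ∑ j, x j with hS
    apply Stmt11Aux.le_of_pow_le_pow' μ s (C*S/x i0) hs0
    intro k
    have h1 : ((A^k).mulVec x) i0 = μ^k * x i0 := by
      rw [Stmt11Aux.pow_mulVec_eig A heig k]
      simp
    have h2 : ((A^k).mulVec x) i0 ≤ C * s^k * S := by
      simp only [Matrix.mulVec, dotProduct]
      calc ∑ j, (A^k) i0 j * x j ≤ ∑ j, (C * s^k) * x j :=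
            Finset.sum_le_sum fun j _ => mul_le_mul_of_nonneg_right (hAk k i0 j) (hx j)
      _ = C * s^k * S := by rw [← Finset.mul_sum]
    have h3 : μ^k * x i0 ≤ C * s^k * S := by rw [← h1]; exact h2
    have h4 : μ^k ≤ C * s^k * S / x i0 := (le_div_iff₀ hi0).2 h3
    calc μ^k ≤ C * s^k * S / x i0 := h4
    _ = C*S/x i0 * s^k := by ring
  -- B applied to an eigenvector of A
  have Beig : ∀ (x : Fin n → ℝ) (μ : ℝ), (∀ i, 0 ≤ x i) → 0 ≤ μ → μ ≤ s →
      A.mulVec x = μ • x → B.mulVec x = (∑' k : ℕ, f k * μ ^ k) • x := by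
    intro x μ hx hμ0 hμs heig
    funext i
    rw [hB]
    rw [Stmt11Aux.B_mulVec_form A f hA hs0 hst hC hAk hf x i]
    have h1 : ∀ k : ℕ, f k * ((A ^ k).mulVec x) i = (f k * μ^k) * x i := by
      intro k
      rw [Stmt11Aux.pow_mulVec_eig A heig k]
      simp only [Pi.smul_apply, smul_eq_mul]
      ring
    simp only [h1]
    rw [tsum_mul_right]
    simp
  -- main proof
  ext l
  simp only [Set.mem_image, distSpec, Set.mem_setOf_eq]
  constructor
  · -- hard direction: l ∈ σ_D(B) implies l = f(μ) for some μ ∈ σ_D(A)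
    rintro ⟨hl0, x, hx, hxne, hBx⟩
    set K : Set (Fin n → ℝ) := {z | (∀ i, 0 ≤ z i) ∧ B.mulVec z = l • z} with hK
    have hKpos : ∀ z ∈ K, ∀ i, 0 ≤ z i := fun z hz => hz.1
    have hKcl : IsClosed K := by
      have h1 : IsClosed {z : Fin n → ℝ | ∀ i, 0 ≤ z i} := by
        have he : {z : Fin n → ℝ | ∀ i, 0 ≤ z i} = ⋂ i, {z | 0 ≤ z i} := by
          ext z; simp
        rw [he]
        exact isClosed_iInter fun i => isClosed_le continuous_const (continuous_apply i)
      have h2 : IsClosed {z : Fin n → ℝ | B.mulVec z = l • z} := by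
        have hc1 : Continuous fun z : Fin n → ℝ => B.mulVec z := by
          apply continuous_pi
          intro i
          simp only [Matrix.mulVec, dotProduct]
          exact continuous_finset_sum _ fun j _ => continuous_const.mul (continuous_apply j)
        have hc2 : Continuous fun z : Fin n → ℝ => l • z := by
          apply continuous_pi
          intro i
          exact (continuous_apply i).const_smul l
        exact isClosed_eq hc1 hc2
      have he2 : K = {z : Fin n → ℝ | ∀ i, 0 ≤ z i} ∩ {z | B.mulVec z = l • z} := by
        rfl
      rw [he2]
      exact h1.inter h2
    have hKadd : ∀ z ∈ K, ∀ w ∈ K, z + w ∈ K := by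
      rintro z ⟨hz1, hz2⟩ w ⟨hw1, hw2⟩
      refine ⟨fun i => add_nonneg (hz1 i) (hw1 i), ?_⟩
      rw [Matrix.mulVec_add, hz2, hw2, smul_add]
    have hKsmul : ∀ c : ℝ, 0 ≤ c → ∀ z ∈ K, c • z ∈ K := by
      rintro c hc z ⟨hz1, hz2⟩
      refine ⟨fun i => mul_nonneg hc (hz1 i), ?_⟩
      rw [Matrix.mulVec_smul, hz2, smul_comm]
    have hKA : ∀ z ∈ K, A.mulVec z ∈ K := by
      rintro z ⟨hz1, hz2⟩
      refine ⟨Stmt11Aux.mulVec_nonneg A hA hz1, ?_⟩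
      -- B (A z) = l • (A z)
      have key : B.mulVec (A.mulVec z) = A.mulVec (B.mulVec z) := by
        funext i
        rw [hB, Stmt11Aux.B_mulVec_form A f hA hs0 hst hC hAk hf (A.mulVec z) i]
        have hR : A.mulVec ((∑' k : ℕ, f k • A ^ k).mulVec z) i
            = ∑ j, A i j * ∑' k : ℕ, f k * ((A ^ k).mulVec z) j := by
          have h0 : A.mulVec ((∑' k : ℕ, f k • A ^ k).mulVec z) i
              = ∑ j, A i j * ((∑' k : ℕ, f k • A ^ k).mulVec z) j := rfl
          rw [h0]
          exact Finset.sum_congr rfl fun j _ => by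
            rw [Stmt11Aux.B_mulVec_form A f hA hs0 hst hC hAk hf z j]
        rw [hR]
        have hsum : ∀ j : Fin n, Summable fun k => A i j * (f k * ((A ^ k).mulVec z) j) :=
          fun j => (Stmt11Aux.summable_apply A f hA hs0 hst hC hAk hf z j).mul_left (A i j)
        have hswap : ∑ j, A i j * ∑' k : ℕ, f k * ((A ^ k).mulVec z) j
            = ∑' k : ℕ, ∑ j, A i j * (f k * ((A ^ k).mulVec z) j) := by
          rw [Summable.tsum_finsetSum (fun j _ => hsum j)]
          congr 1
          funext j
          exact (tsum_mul_left).symm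
        rw [hswap]
        congr 1
        funext k
        have hL : f k * ((A ^ (k+1)).mulVec z) i = f k * (A.mulVec ((A^k).mulVec z)) i := by
          rw [Matrix.mulVec_mulVec, ← pow_succ']
        have hcalc : f k * ((A ^ k).mulVec (A.mulVec z)) i
            = f k * ((A ^ (k+1)).mulVec z) i := by
          rw [Matrix.mulVec_mulVec, ← pow_succ]
        rw [hcalc, hL]
        simp only [Matrix.mulVec, dotProduct, Finset.mul_sum]
        refine Finset.sum_congr rfl fun j _ => ?_
        refine Finset.sum_congr rfl fun x _ => ?_
        ring
      rw [key, hz2, Matrix.mulVec_smul]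
    have hxK : x ∈ K := ⟨hx, hBx⟩
    obtain ⟨μ, hμ0, v, hvK, hvne, hAv⟩ :=
      Stmt11Aux.cone_eig A K hA hKpos hKcl hKadd hKsmul hKA x hxK hxne
    have hμs : μ ≤ s := eig_le v μ hvK.1 hvne hμ0 hAv
    have hBv : B.mulVec v = (∑' k : ℕ, f k * μ ^ k) • v := Beig v μ hvK.1 hμ0 hμs hAv
    obtain ⟨i0, hi0⟩ := Stmt11Aux.exists_pos_coord hvK.1 hvne
    have heq : l * v i0 = (∑' k : ℕ, f k * μ ^ k) * v i0 := by
      have h1 : B.mulVec v i0 = l * v i0 := by rw [hvK.2]; simp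
      have h2 : B.mulVec v i0 = (∑' k : ℕ, f k * μ ^ k) * v i0 := by rw [hBv]; simp
      rw [← h1, h2]
    have hfμ : (∑' k : ℕ, f k * μ ^ k) = l := (mul_right_cancel₀ hi0.ne' heq).symm
    exact ⟨μ, ⟨hμ0, v, hvK.1, hvne, hAv⟩, hfμ⟩
  · -- easy direction
    rintro ⟨μ, ⟨hμ0, x, hx, hxne, heig⟩, rfl⟩
    have hμs : μ ≤ s := eig_le x μ hx hxne hμ0 heig
    have hBx : B.mulVec x = (∑' k : ℕ, f k * μ ^ k) • x := Beig x μ hx hμ0 hμs heig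
    obtain ⟨i0, hi0⟩ := Stmt11Aux.exists_pos_coord hx hxne
    have hl0 : 0 ≤ ∑' k : ℕ, f k * μ ^ k := by
      have h1 : 0 ≤ B.mulVec x i0 := by
        simp only [Matrix.mulVec, dotProduct]
        exact Finset.sum_nonneg fun j _ => mul_nonneg (hfA i0 j) (hx j)
      have h2 : B.mulVec x i0 = (∑' k : ℕ, f k * μ ^ k) * x i0 := by rw [hBx]; simp
      rw [h2] at h1
      by_contra hneg
      push_neg at hneg
      nlinarith
    exact ⟨hl0, x, hx, hxne, hBx⟩
end

section
/- Let A₁,…,A_m be nonnegative n×n matrices, α₁,…,α_m > 0, and i an index. Then the max-algebra local spectral radius of the Hadamard weighted geometric mean satisfies r_{e_i}(A₁^{(α₁)} ∘ ⋯ ∘ A_m^{(α_m)}) ≤ r_{e_i}(A₁)^{α₁} ⋯ r_{e_i}(A_m)^{α_m}, where no normalization Σα_j = 1 is assumed (Σα_j may be any positive number). -/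
open Filter Finset

section aux

open Real

lemma e_nonneg {n : ℕ} (i j : Fin n) : 0 ≤ e i j := by
  unfold e; split <;> norm_num

lemma e_le_one {n : ℕ} (i j : Fin n) : e i j ≤ 1 := by
  unfold e; split <;> norm_num

lemma maxPow_nonneg {n : ℕ} {A : Matrix (Fin n) (Fin n) ℝ} (hA : ∀ i j, 0 ≤ A i j) :
    ∀ k i j, 0 ≤ maxPow A k i j := by
  intro k
  induction k with
  | zero => intro i j; unfold maxPow; split <;> norm_num
  | succ k ih =>
    intro i j
    exact Real.iSup_nonneg fun l => mul_nonneg (ih i l) (hA l j)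

lemma vnorm_nonneg {n : ℕ} {A : Matrix (Fin n) (Fin n) ℝ} (hA : ∀ i j, 0 ≤ A i j)
    (k : ℕ) (i : Fin n) : 0 ≤ vnorm (maxVecMul (maxPow A k) (e i)) :=
  Real.iSup_nonneg fun j => Real.iSup_nonneg fun r =>
    mul_nonneg (maxPow_nonneg hA k j r) (e_nonneg i r)

lemma key_pointwise {n m : ℕ} (A : Fin m → Matrix (Fin n) (Fin n) ℝ)
    (hA : ∀ l i j, 0 ≤ A l i j) (α : Fin m → ℝ) (hα : ∀ l, 0 < α l) :
    ∀ k p q, maxPow (fun p q => ∏ l, (A l p q) ^ (α l)) k p q ≤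
      ∏ l, (maxPow (A l) k p q) ^ (α l) := by
  intro k
  induction k with
  | zero =>
    intro p q
    by_cases h : p = q
    · simp [maxPow, h, Real.one_rpow]
    · simp only [maxPow, if_neg h]
      exact Finset.prod_nonneg fun l _ => Real.rpow_nonneg le_rfl (α l)
  | succ k ih =>
    intro p q
    show (⨆ r, maxPow (fun p q => ∏ l, (A l p q) ^ (α l)) k p r * ∏ l, (A l r q) ^ (α l)) ≤ _
    apply Real.iSup_le _
      (Finset.prod_nonneg fun l _ => Real.rpow_nonneg (maxPow_nonneg (hA l) _ _ _) _)
    intro r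
    calc maxPow (fun p q => ∏ l, (A l p q) ^ (α l)) k p r * ∏ l, (A l r q) ^ (α l)
        ≤ (∏ l, (maxPow (A l) k p r) ^ α l) * ∏ l, (A l r q) ^ α l :=
          mul_le_mul_of_nonneg_right (ih p r)
            (Finset.prod_nonneg fun l _ => Real.rpow_nonneg (hA l r q) _)
      _ = ∏ l, (maxPow (A l) k p r * A l r q) ^ α l := by
          rw [← Finset.prod_mul_distrib]
          exact Finset.prod_congr rfl fun l _ =>
            (Real.mul_rpow (maxPow_nonneg (hA l) k p r) (hA l r q)).symm
      _ ≤ ∏ l, (maxPow (A l) (k+1) p q) ^ α l := by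
          apply Finset.prod_le_prod
          · intro l _
            exact Real.rpow_nonneg (mul_nonneg (maxPow_nonneg (hA l) k p r) (hA l r q)) _
          · intro l _
            apply Real.rpow_le_rpow
              (mul_nonneg (maxPow_nonneg (hA l) k p r) (hA l r q)) _ (hα l).le
            exact le_ciSup (f := fun r' => maxPow (A l) k p r' * A l r' q)
              (Set.finite_range _).bddAbove r

lemma vnorm_prod_le {n m : ℕ} (A : Fin m → Matrix (Fin n) (Fin n) ℝ)
    (hA : ∀ l i j, 0 ≤ A l i j) (α : Fin m → ℝ) (hα : ∀ l, 0 < α l) (i : Fin n) (k : ℕ) :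
    vnorm (maxVecMul (maxPow (fun p q => ∏ l, (A l p q) ^ (α l)) k) (e i)) ≤
      ∏ l, (vnorm (maxVecMul (maxPow (A l) k) (e i))) ^ (α l) := by
  have hv : ∀ l, 0 ≤ vnorm (maxVecMul (maxPow (A l) k) (e i)) :=
    fun l => vnorm_nonneg (hA l) k i
  have hRHS : 0 ≤ ∏ l, (vnorm (maxVecMul (maxPow (A l) k) (e i))) ^ (α l) :=
    Finset.prod_nonneg fun l _ => Real.rpow_nonneg (hv l) _
  apply Real.iSup_le _ hRHS
  intro j
  apply Real.iSup_le _ hRHS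
  intro r
  by_cases hr : r = i
  · have he : e i r = 1 := by unfold e; simp [hr]
    rw [he, mul_one, hr]
    calc maxPow (fun p q => ∏ l, (A l p q) ^ (α l)) k j i
        ≤ ∏ l, (maxPow (A l) k j i) ^ α l := key_pointwise A hA α hα k j i
      _ ≤ ∏ l, (vnorm (maxVecMul (maxPow (A l) k) (e i))) ^ (α l) := by
          apply Finset.prod_le_prod
          · intro l _; exact Real.rpow_nonneg (maxPow_nonneg (hA l) k j i) _
          · intro l _
            apply Real.rpow_le_rpow (maxPow_nonneg (hA l) k j i) _ (hα l).le
            have h1 : maxPow (A l) k j i ≤ maxVecMul (maxPow (A l) k) (e i) j := by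
              have h2 : maxPow (A l) k j i * e i i ≤ maxVecMul (maxPow (A l) k) (e i) j :=
                le_ciSup (f := fun r' => maxPow (A l) k j r' * e i r')
                  (Set.finite_range _).bddAbove i
              have h3 : e i i = 1 := by unfold e; simp
              rw [h3, mul_one] at h2; exact h2
            exact h1.trans (le_ciSup (f := fun j' => maxVecMul (maxPow (A l) k) (e i) j')
              (Set.finite_range _).bddAbove j)
  · have he : e i r = 0 := by unfold e; simp [hr]
    rw [he, mul_zero]
    exact hRHS

lemma v_bound {n : ℕ} (A : Matrix (Fin n) (Fin n) ℝ) (hA : ∀ i j, 0 ≤ A i j) (i : Fin n) :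
    ∃ M : ℝ, 1 ≤ M ∧
      ∀ k, (vnorm (maxVecMul (maxPow A k) (e i))) ^ ((k : ℝ)⁻¹) ≤ M := by
  set M : ℝ := 1 + ∑ p, ∑ q, A p q with hM
  have hM1 : 1 ≤ M := by
    have : 0 ≤ ∑ p, ∑ q, A p q :=
      Finset.sum_nonneg fun p _ => Finset.sum_nonneg fun q _ => hA p q
    simp only [hM]; linarith
  refine ⟨M, hM1, ?_⟩
  have hM0 : 0 ≤ M := by linarith
  have hentry : ∀ p q, A p q ≤ M := by
    intro p q
    have h1 : A p q ≤ ∑ q', A p q' :=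
      Finset.single_le_sum (fun q' _ => hA p q') (Finset.mem_univ q)
    have h2 : ∑ q', A p q' ≤ ∑ p', ∑ q', A p' q' :=
      Finset.single_le_sum (fun p' _ => Finset.sum_nonneg fun q' _ => hA p' q')
        (Finset.mem_univ p)
    simp only [hM]; linarith
  have hpow : ∀ k p q, maxPow A k p q ≤ M ^ k := by
    intro k
    induction k with
    | zero => intro p q; unfold maxPow; split <;> norm_num
    | succ k ih =>
      intro p q
      apply Real.iSup_le _ (by positivity)
      intro r
      calc maxPow A k p r * A r q ≤ M ^ k * M :=
            mul_le_mul (ih p r) (hentry r q) (hA r q) (by positivity)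
        _ = M ^ (k + 1) := (pow_succ M k).symm
  have hv : ∀ k, vnorm (maxVecMul (maxPow A k) (e i)) ≤ M ^ k := by
    intro k
    apply Real.iSup_le _ (by positivity)
    intro j
    apply Real.iSup_le _ (by positivity)
    intro r
    calc maxPow A k j r * e i r ≤ M ^ k * 1 :=
          mul_le_mul (hpow k j r) (e_le_one i r) (e_nonneg i r) (by positivity)
      _ = M ^ k := mul_one _
  intro k
  rcases Nat.eq_zero_or_pos k with hk | hk
  · subst hk; simp [Real.rpow_zero]; exact hM1
  · have hknz : (k : ℝ) ≠ 0 := Nat.cast_ne_zero.2 hk.ne'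
    calc (vnorm (maxVecMul (maxPow A k) (e i))) ^ ((k : ℝ)⁻¹)
        ≤ (M ^ k) ^ ((k : ℝ)⁻¹) :=
          Real.rpow_le_rpow (vnorm_nonneg hA k i) (hv k) (by positivity)
      _ = M := by
          rw [← Real.rpow_natCast M k, ← Real.rpow_mul hM0,
            mul_inv_cancel₀ hknz, Real.rpow_one]

end aux

/-- `r_{e_i}(A₁^{(α₁)} ∘ ⋯ ∘ A_m^{(α_m)}) ≤ r_{e_i}(A₁)^{α₁} ⋯ r_{e_i}(A_m)^{α_m}`
for arbitrary positive weights `α_j`. -/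
theorem stmt12 {n m : ℕ} (A : Fin m → Matrix (Fin n) (Fin n) ℝ)
    (hA : ∀ l i j, 0 ≤ A l i j) (α : Fin m → ℝ) (hα : ∀ l, 0 < α l) (i : Fin n) :
    rloc (fun p q => ∏ l, (A l p q) ^ (α l)) (e i) ≤
      ∏ l, (rloc (A l) (e i)) ^ (α l) := by
  classical
  set u : Fin m → ℕ → ℝ :=
    fun l k => (vnorm (maxVecMul (maxPow (A l) k) (e i))) ^ ((k : ℝ)⁻¹) with hu
  set g : ℕ → ℝ :=
    fun k => (vnorm (maxVecMul (maxPow (fun p q => ∏ l, (A l p q) ^ (α l)) k) (e i)))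
      ^ ((k : ℝ)⁻¹) with hg
  have hBnn : ∀ p q, (0:ℝ) ≤ ∏ l, (A l p q) ^ (α l) :=
    fun p q => Finset.prod_nonneg fun l _ => Real.rpow_nonneg (hA l p q) _
  have hu0 : ∀ l k, 0 ≤ u l k :=
    fun l k => Real.rpow_nonneg (vnorm_nonneg (hA l) k i) _
  have hg0 : ∀ k, 0 ≤ g k :=
    fun k => Real.rpow_nonneg (vnorm_nonneg hBnn k i) _
  have hubdd : ∀ l, IsBoundedUnder (· ≤ ·) atTop (u l) := by
    intro l
    obtain ⟨M, _, hM⟩ := v_bound (A l) (hA l) i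
    exact isBoundedUnder_of ⟨M, fun k => hM k⟩
  set r : Fin m → ℝ := fun l => rloc (A l) (e i) with hr
  have hrl : ∀ l, r l = atTop.limsup (u l) := fun l => rfl
  have hr0 : ∀ l, 0 ≤ r l := by
    intro l
    rw [hrl l]
    exact le_limsup_of_frequently_le (Frequently.of_forall fun k => hu0 l k) (hubdd l)
  have hgoal : atTop.limsup g ≤ ∏ l, (r l) ^ (α l) := by
    have hcob : IsCoboundedUnder (· ≤ ·) atTop g :=
      IsBoundedUnder.isCoboundedUnder_le (isBoundedUnder_of ⟨0, fun k => hg0 k⟩)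
    have hstep : ∀ ε : ℝ, 0 < ε → atTop.limsup g ≤ ∏ l, (r l + ε) ^ (α l) := by
      intro ε hε
      have hev : ∀ᶠ k in atTop, ∀ l, u l k < r l + ε := by
        apply Filter.eventually_all.2
        intro l
        apply eventually_lt_of_limsup_lt _ (hubdd l)
        rw [← hrl l]; linarith
      apply limsup_le_of_le hcob
      filter_upwards [hev] with k hk
      calc g k ≤ (∏ l, (vnorm (maxVecMul (maxPow (A l) k) (e i))) ^ (α l)) ^ ((k : ℝ)⁻¹) :=
            Real.rpow_le_rpow (vnorm_nonneg hBnn k i)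
              (vnorm_prod_le A hA α hα i k) (by positivity)
        _ = ∏ l, (u l k) ^ (α l) := by
            rw [← Real.finset_prod_rpow _ _
              (fun l _ => Real.rpow_nonneg (vnorm_nonneg (hA l) k i) _)]
            apply Finset.prod_congr rfl
            intro l _
            have hv := vnorm_nonneg (hA l) k i
            show (vnorm (maxVecMul (maxPow (A l) k) (e i)) ^ α l) ^ ((k : ℝ)⁻¹) =
              (vnorm (maxVecMul (maxPow (A l) k) (e i)) ^ ((k : ℝ)⁻¹)) ^ α l
            rw [← Real.rpow_mul hv, mul_comm (α l) ((k : ℝ)⁻¹), Real.rpow_mul hv]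
        _ ≤ ∏ l, (r l + ε) ^ (α l) := by
            apply Finset.prod_le_prod
            · intro l _; exact Real.rpow_nonneg (hu0 l k) _
            · intro l _
              exact Real.rpow_le_rpow (hu0 l k) (hk l).le (hα l).le
    have hcont : Tendsto (fun ε : ℝ => ∏ l, (r l + ε) ^ (α l)) (nhdsWithin 0 (Set.Ioi 0))
        (nhds (∏ l, (r l) ^ (α l))) := by
      have h1 : Tendsto (fun ε : ℝ => ∏ l, (r l + ε) ^ (α l)) (nhds 0)
          (nhds (∏ l, (r l) ^ (α l))) := by
        apply tendsto_finset_prod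
        intro l _
        have h2 : Tendsto (fun ε : ℝ => r l + ε) (nhds 0) (nhds (r l)) := by
          have h2' : Continuous (fun ε : ℝ => r l + ε) := continuous_const.add continuous_id
          simpa using h2'.tendsto (0:ℝ)
        have h3 : ContinuousAt (fun x : ℝ => x ^ (α l)) (r l) :=
          Real.continuousAt_rpow_const (r l) (α l) (Or.inr (hα l).le)
        exact h3.tendsto.comp h2
      exact h1.mono_left nhdsWithin_le_nhds
    apply ge_of_tendsto hcont
    filter_upwards [self_mem_nhdsWithin] with ε hε
    exact hstep ε hε
  exact hgoal
end

section
/- Let A₁,…,A_m be nonnegative n×n matrices, x ∈ ℝ_+^n, and α₁,…,α_m ≥ 0 with Σα_j ≥ 1. Then ρ_x(A₁^{(α₁)} ∘ ⋯ ∘ A_m^{(α_m)}) ≤ ρ_x(A₁)^{α₁} ⋯ ρ_x(A_m)^{α_m}, where no normalization Σα_j = 1 is required. -/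
open Filter Finset

open Real

-- binary sum-power inequality
lemma my_add_rpow_le {p a b : ℝ} (ha : 0 ≤ a) (hb : 0 ≤ b) (hp : 1 ≤ p) :
    a ^ p + b ^ p ≤ (a + b) ^ p := by
  lift a to NNReal using ha
  lift b to NNReal using hb
  have := NNReal.add_rpow_le_rpow_add a b hp
  exact_mod_cast this

lemma my_sum_rpow_le {ι : Type*} (s : Finset ι) (w : ι → ℝ) (hw : ∀ i, 0 ≤ w i) {p : ℝ}
    (hp : 1 ≤ p) : ∑ i ∈ s, w i ^ p ≤ (∑ i ∈ s, w i) ^ p := by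
  induction s using Finset.cons_induction with
  | empty => simp [Real.zero_rpow (by linarith : p ≠ 0)]
  | cons i s hi ih =>
    rw [Finset.sum_cons, Finset.sum_cons]
    calc w i ^ p + ∑ j ∈ s, w j ^ p ≤ w i ^ p + (∑ j ∈ s, w j) ^ p := by linarith
      _ ≤ (w i + ∑ j ∈ s, w j) ^ p :=
        my_add_rpow_le (hw i) (Finset.sum_nonneg fun j _ => hw j) hp

-- normalized Hölder
lemma my_holder1 {m : ℕ} {ι : Type*} [Fintype ι] (z : Fin m → ι → ℝ) (hz : ∀ l q, 0 ≤ z l q)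
    (β : Fin m → ℝ) (hβ : ∀ l, 0 ≤ β l) (hβ1 : ∑ l, β l = 1) :
    ∑ q : ι, ∏ l, z l q ^ β l ≤ ∏ l, (∑ q : ι, z l q) ^ β l := by
  set S : Fin m → ℝ := fun l => ∑ q : ι, z l q with hS
  have hSnn : ∀ l, 0 ≤ S l := fun l => Finset.sum_nonneg fun q _ => hz l q
  by_cases hc : ∃ l, S l = 0 ∧ β l ≠ 0
  · obtain ⟨l0, hl0, hb0⟩ := hc
    have hz0 : ∀ q ∈ Finset.univ (α := ι), z l0 q = 0 :=
      (Finset.sum_eq_zero_iff_of_nonneg (fun q _ => hz l0 q)).mp hl0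
    have hL : ∀ q : ι, ∏ l, z l q ^ β l = 0 := by
      intro q
      apply Finset.prod_eq_zero (Finset.mem_univ l0)
      rw [hz0 q (Finset.mem_univ q)]
      exact Real.zero_rpow hb0
    rw [Finset.sum_congr rfl fun q _ => hL q]
    simp only [Finset.sum_const, smul_zero]
    exact Finset.prod_nonneg fun l _ => Real.rpow_nonneg (hSnn l) _
  · push_neg at hc
    have hP : 0 < ∏ l, S l ^ β l := by
      apply Finset.prod_pos
      intro l _
      rcases eq_or_ne (β l) 0 with h | h
      · rw [h, Real.rpow_zero]; exact one_pos
      · exact Real.rpow_pos_of_pos (lt_of_le_of_ne (hSnn l) (Ne.symm (mt (hc l) h))) _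
    rw [← div_le_one hP]
    calc (∑ q : ι, ∏ l, z l q ^ β l) / ∏ l, S l ^ β l
        = ∑ q : ι, ∏ l, (z l q / S l) ^ β l := by
          rw [Finset.sum_div]
          refine Finset.sum_congr rfl fun q _ => ?_
          rw [← Finset.prod_div_distrib]
          refine Finset.prod_congr rfl fun l _ => ?_
          rw [Real.div_rpow (hz l q) (hSnn l)]
      _ ≤ ∑ q : ι, ∑ l, β l * (z l q / S l) := by
          refine Finset.sum_le_sum fun q _ => ?_
          exact Real.geom_mean_le_arith_mean_weighted _ _ _ (fun l _ => hβ l) hβ1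
            (fun l _ => div_nonneg (hz l q) (hSnn l))
      _ = ∑ l, β l * (S l / S l) := by
          rw [Finset.sum_comm]
          refine Finset.sum_congr rfl fun l _ => ?_
          rw [← Finset.mul_sum, ← Finset.sum_div]
      _ ≤ ∑ l, β l * 1 := by
          refine Finset.sum_le_sum fun l _ => ?_
          apply mul_le_mul_of_nonneg_left _ (hβ l)
          rcases eq_or_ne (S l) 0 with h | h
          · rw [h]; simp
          · rw [div_self h]
      _ = 1 := by simp [hβ1]

-- general Hölder with total weight ≥ 1
lemma my_holder {m : ℕ} {ι : Type*} [Fintype ι] (z : Fin m → ι → ℝ) (hz : ∀ l q, 0 ≤ z l q)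
    (α : Fin m → ℝ) (hα : ∀ l, 0 ≤ α l) (hs : 1 ≤ ∑ l, α l) :
    ∑ q : ι, ∏ l, z l q ^ α l ≤ ∏ l, (∑ q : ι, z l q) ^ α l := by
  set s := ∑ l, α l with hsdef
  have hs0 : (0:ℝ) < s := lt_of_lt_of_le one_pos hs
  set β : Fin m → ℝ := fun l => α l / s with hβdef
  have hβ : ∀ l, 0 ≤ β l := fun l => div_nonneg (hα l) hs0.le
  have hβ1 : ∑ l, β l = 1 := by
    simp only [hβdef]
    rw [← Finset.sum_div, div_self hs0.ne']
  have hβs : ∀ l, β l * s = α l := fun l => div_mul_cancel₀ _ hs0.ne'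
  calc ∑ q : ι, ∏ l, z l q ^ α l
      = ∑ q : ι, (∏ l, z l q ^ β l) ^ s := by
        refine Finset.sum_congr rfl fun q _ => ?_
        rw [← Real.finset_prod_rpow _ _ (fun l _ => Real.rpow_nonneg (hz l q) _) s]
        refine Finset.prod_congr rfl fun l _ => ?_
        rw [← Real.rpow_mul (hz l q) (β l) s, hβs l]
    _ ≤ (∑ q : ι, ∏ l, z l q ^ β l) ^ s :=
        my_sum_rpow_le _ _ (fun q => Finset.prod_nonneg fun l _ => Real.rpow_nonneg (hz l q) _) hs
    _ ≤ (∏ l, (∑ q : ι, z l q) ^ β l) ^ s := by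
        apply Real.rpow_le_rpow
          (Finset.sum_nonneg fun q _ => Finset.prod_nonneg fun l _ => Real.rpow_nonneg (hz l q) _)
          (my_holder1 z hz β hβ hβ1) hs0.le
    _ = ∏ l, (∑ q : ι, z l q) ^ α l := by
        rw [← Real.finset_prod_rpow _ _
          (fun l _ => Real.rpow_nonneg (Finset.sum_nonneg fun q _ => hz l q) _) s]
        refine Finset.prod_congr rfl fun l _ => ?_
        rw [← Real.rpow_mul (Finset.sum_nonneg fun q _ => hz l q), hβs l]


lemma my_mulVec_apply {n : ℕ} (M : Matrix (Fin n) (Fin n) ℝ) (v : Fin n → ℝ) (p : Fin n) :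
    M.mulVec v p = ∑ q, M p q * v q := rfl

lemma my_pow_nonneg {n : ℕ} {M : Matrix (Fin n) (Fin n) ℝ} (hM : ∀ i j, 0 ≤ M i j) (k : ℕ) :
    ∀ i j, 0 ≤ (M ^ k) i j := by
  induction k with
  | zero =>
    intro i j
    rw [pow_zero]
    by_cases h : i = j <;> simp [Matrix.one_apply, h]
  | succ k ih =>
    intro i j
    rw [pow_succ, Matrix.mul_apply]
    exact Finset.sum_nonneg fun q _ => mul_nonneg (ih i q) (hM q j)

lemma my_mulVec_nonneg {n : ℕ} {M : Matrix (Fin n) (Fin n) ℝ} (hM : ∀ i j, 0 ≤ M i j)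
    {v : Fin n → ℝ} (hv : ∀ j, 0 ≤ v j) (i : Fin n) : 0 ≤ M.mulVec v i := by
  rw [my_mulVec_apply]
  exact Finset.sum_nonneg fun q _ => mul_nonneg (hM i q) (hv q)

lemma my_vnorm_nonneg {n : ℕ} {f : Fin n → ℝ} (h : ∀ i, 0 ≤ f i) : 0 ≤ vnorm f :=
  Real.iSup_nonneg h

lemma my_vnorm_le {n : ℕ} {f : Fin n → ℝ} {c : ℝ} (h : ∀ i, f i ≤ c) (hc : 0 ≤ c) :
    vnorm f ≤ c := Real.iSup_le h hc

lemma my_le_vnorm {n : ℕ} (f : Fin n → ℝ) (i : Fin n) : f i ≤ vnorm f :=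
  le_ciSup (Set.Finite.bddAbove (Set.finite_range f)) i

-- growth bound: entries of A^k x are at most T^k * X
lemma my_growth {n : ℕ} {M : Matrix (Fin n) (Fin n) ℝ} (hM : ∀ i j, 0 ≤ M i j)
    {x : Fin n → ℝ} (hx : ∀ i, 0 ≤ x i) (k : ℕ) (p : Fin n) :
    (M ^ k).mulVec x p ≤ (∑ i, ∑ j, M i j) ^ k * (∑ q, x q) := by
  induction k generalizing p with
  | zero =>
    rw [pow_zero, Matrix.one_mulVec, pow_zero, one_mul]
    exact Finset.single_le_sum (fun q _ => hx q) (Finset.mem_univ p)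
  | succ k ih =>
    have hT : 0 ≤ ∑ i, ∑ j, M i j :=
      Finset.sum_nonneg fun i _ => Finset.sum_nonneg fun j _ => hM i j
    have hX : 0 ≤ ∑ q, x q := Finset.sum_nonneg fun q _ => hx q
    rw [pow_succ', ← Matrix.mulVec_mulVec, my_mulVec_apply]
    calc ∑ q, M p q * (M ^ k).mulVec x q
        ≤ ∑ q, M p q * ((∑ i, ∑ j, M i j) ^ k * (∑ q, x q)) := by
          refine Finset.sum_le_sum fun q _ => ?_
          exact mul_le_mul_of_nonneg_left (ih q) (hM p q)
      _ = (∑ q, M p q) * ((∑ i, ∑ j, M i j) ^ k * (∑ q, x q)) := by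
          rw [← Finset.sum_mul]
      _ ≤ (∑ i, ∑ j, M i j) * ((∑ i, ∑ j, M i j) ^ k * (∑ q, x q)) := by
          refine mul_le_mul_of_nonneg_right ?_ (mul_nonneg (pow_nonneg hT k) hX)
          exact Finset.single_le_sum (f := fun i => ∑ j, M i j)
            (fun i _ => Finset.sum_nonneg fun j _ => hM i j) (Finset.mem_univ p)
      _ = (∑ i, ∑ j, M i j) ^ (k+1) * (∑ q, x q) := by ring

lemma my_key {n m : ℕ} (A : Fin m → Matrix (Fin n) (Fin n) ℝ)
    (hA : ∀ l i j, 0 ≤ A l i j) (x : Fin n → ℝ) (hx : ∀ i, 0 ≤ x i)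
    (α : Fin m → ℝ) (hα : ∀ l, 0 ≤ α l) (hs : 1 ≤ ∑ l, α l)
    (B : Matrix (Fin n) (Fin n) ℝ) (hBdef : ∀ p q, B p q = ∏ l, (A l p q) ^ (α l))
    (k : ℕ) (p : Fin n) :
    (B ^ k).mulVec x p ≤
      ∏ l, ((A l ^ k).mulVec (fun q => x q ^ (∑ l, α l)⁻¹)) p ^ α l := by
  set s := ∑ l, α l with hsdef
  have hs0 : (0:ℝ) < s := lt_of_lt_of_le one_pos hs
  set y : Fin n → ℝ := fun q => x q ^ s⁻¹ with hydef
  have hy : ∀ q, 0 ≤ y q := fun q => Real.rpow_nonneg (hx q) _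
  have hB : ∀ p q, 0 ≤ B p q := fun p q => by
    rw [hBdef]
    exact Finset.prod_nonneg fun l _ => Real.rpow_nonneg (hA l p q) _
  induction k generalizing p with
  | zero =>
    rw [pow_zero, Matrix.one_mulVec]
    have h1 : ∀ l : Fin m, ((1 : Matrix (Fin n) (Fin n) ℝ) ^ 0).mulVec y p = y p := by
      intro _; rw [pow_zero, Matrix.one_mulVec]
    calc x p ≤ ∏ l, (y p) ^ α l := by
          rcases eq_or_lt_of_le (hx p) with h0 | hpos
          · rw [← h0]
            exact Finset.prod_nonneg fun l _ => Real.rpow_nonneg (hy p) _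
          · have : ∀ l : Fin m, (y p) ^ α l = x p ^ (s⁻¹ * α l) := fun l =>
              (Real.rpow_mul (hx p) _ _).symm
            rw [Finset.prod_congr rfl fun l _ => this l,
              ← Real.rpow_sum_of_pos hpos, ← Finset.mul_sum, ← hsdef,
              inv_mul_cancel₀ hs0.ne', Real.rpow_one]
      _ = ∏ l, ((A l ^ 0).mulVec y) p ^ α l := by
          refine Finset.prod_congr rfl fun l _ => ?_
          rw [pow_zero, Matrix.one_mulVec]
  | succ k ih =>
    set u : Fin m → Fin n → ℝ := fun l => (A l ^ k).mulVec y with hudef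
    have hu : ∀ l q, 0 ≤ u l q := fun l q =>
      my_mulVec_nonneg (my_pow_nonneg (hA l) k) hy q
    rw [pow_succ', ← Matrix.mulVec_mulVec, my_mulVec_apply]
    calc ∑ q, B p q * (B ^ k).mulVec x q
        ≤ ∑ q, ∏ l, (A l p q * u l q) ^ α l := by
          refine Finset.sum_le_sum fun q _ => ?_
          calc B p q * (B ^ k).mulVec x q ≤ B p q * ∏ l, u l q ^ α l :=
                mul_le_mul_of_nonneg_left (ih q) (hB p q)
            _ = ∏ l, (A l p q * u l q) ^ α l := by
                rw [hBdef p q, ← Finset.prod_mul_distrib]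
                exact Finset.prod_congr rfl fun l _ =>
                  (Real.mul_rpow (hA l p q) (hu l q)).symm
      _ ≤ ∏ l, (∑ q, A l p q * u l q) ^ α l :=
          my_holder (fun l q => A l p q * u l q)
            (fun l q => mul_nonneg (hA l p q) (hu l q)) α hα hs
      _ = ∏ l, ((A l ^ (k+1)).mulVec y) p ^ α l := by
          refine Finset.prod_congr rfl fun l _ => ?_
          rw [pow_succ', ← Matrix.mulVec_mulVec]
          rfl

/-- `ρ_x(A₁^{(α₁)} ∘ ⋯ ∘ A_m^{(α_m)}) ≤ ρ_x(A₁)^{α₁} ⋯ ρ_x(A_m)^{α_m}`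
whenever `α_j ≥ 0` and `Σ α_j ≥ 1`. -/
theorem stmt16 {n m : ℕ} (A : Fin m → Matrix (Fin n) (Fin n) ℝ)
    (hA : ∀ l i j, 0 ≤ A l i j) (x : Fin n → ℝ) (hx : ∀ i, 0 ≤ x i)
    (α : Fin m → ℝ) (hα : ∀ l, 0 ≤ α l) (hs : 1 ≤ ∑ l, α l) :
    rhox (fun p q => ∏ l, (A l p q) ^ (α l)) x ≤ ∏ l, (rhox (A l) x) ^ (α l) := by
  classical
  set B : Matrix (Fin n) (Fin n) ℝ := fun p q => ∏ l, (A l p q) ^ (α l) with hBdef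
  have hsdef : (1:ℝ) ≤ ∑ l, α l := hs
  set s : ℝ := ∑ l, α l with hs_def
  have hs0 : (0:ℝ) < s := lt_of_lt_of_le one_pos hs
  set y : Fin n → ℝ := fun q => x q ^ s⁻¹ with hydef
  have hy : ∀ q, 0 ≤ y q := fun q => Real.rpow_nonneg (hx q) _
  have hB : ∀ p q, 0 ≤ B p q := fun p q =>
    Finset.prod_nonneg fun l _ => Real.rpow_nonneg (hA l p q) _
  set C : ℝ := 1 + ∑ q, x q ^ (s⁻¹ - 1) with hCdef
  have hC1 : 1 ≤ C :=
    le_add_of_nonneg_right (Finset.sum_nonneg fun q _ => Real.rpow_nonneg (hx q) _)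
  have hC0 : (0:ℝ) < C := lt_of_lt_of_le one_pos hC1
  have hyx : ∀ q, y q ≤ C * x q := by
    intro q
    rcases eq_or_lt_of_le (hx q) with h0 | hpos
    · show x q ^ s⁻¹ ≤ C * x q
      rw [← h0, Real.zero_rpow (by positivity : s⁻¹ ≠ 0), mul_zero]
    · have h1 : y q = x q ^ (s⁻¹ - 1) * x q := by
        show x q ^ s⁻¹ = x q ^ (s⁻¹ - 1) * x q
        rw [Real.rpow_sub hpos, Real.rpow_one, div_mul_cancel₀ _ hpos.ne']
      rw [h1]
      apply mul_le_mul_of_nonneg_right _ (hx q)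
      calc x q ^ (s⁻¹ - 1) ≤ ∑ r, x r ^ (s⁻¹ - 1) :=
            Finset.single_le_sum (fun r _ => Real.rpow_nonneg (hx r) _) (Finset.mem_univ q)
        _ ≤ C := by rw [hCdef]; linarith
  set b : Fin m → ℕ → ℝ := fun l k => vnorm ((A l ^ k).mulVec x) with hbdef
  set v : Fin m → ℕ → ℝ := fun l k => b l k ^ ((k:ℝ)⁻¹) with hvdef
  set a : ℕ → ℝ := fun k => vnorm ((B ^ k).mulVec x) ^ ((k:ℝ)⁻¹) with hadef
  have hbnn : ∀ l k, 0 ≤ b l k := fun l k =>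
    my_vnorm_nonneg (fun p => my_mulVec_nonneg (my_pow_nonneg (hA l) k) hx p)
  have hvnn : ∀ l k, 0 ≤ v l k := fun l k => Real.rpow_nonneg (hbnn l k) _
  have hann : ∀ k, 0 ≤ a k := fun k =>
    Real.rpow_nonneg (my_vnorm_nonneg (fun p => my_mulVec_nonneg (my_pow_nonneg hB k) hx p)) _
  have hrv : ∀ l, rhox (A l) x = Filter.atTop.limsup (v l) := fun l => rfl
  have hra : rhox B x = Filter.atTop.limsup a := rfl
  have hmain : ∀ k : ℕ, a k ≤ C ^ (s * (k:ℝ)⁻¹) * ∏ l, v l k ^ α l := by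
    intro k
    have hprodnn : (0:ℝ) ≤ ∏ l, b l k ^ α l :=
      Finset.prod_nonneg fun l _ => Real.rpow_nonneg (hbnn l k) _
    have h1 : vnorm ((B ^ k).mulVec x) ≤ C ^ s * ∏ l, b l k ^ α l := by
      apply my_vnorm_le _ (mul_nonneg (Real.rpow_nonneg hC0.le _) hprodnn)
      intro p
      calc (B ^ k).mulVec x p ≤ ∏ l, ((A l ^ k).mulVec y) p ^ α l :=
            my_key A hA x hx α hα hs B (fun _ _ => rfl) k p
        _ ≤ ∏ l, (C * b l k) ^ α l := by
            apply Finset.prod_le_prod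
            · intro l _
              exact Real.rpow_nonneg
                (my_mulVec_nonneg (my_pow_nonneg (hA l) k) hy p) _
            · intro l _
              apply Real.rpow_le_rpow
                (my_mulVec_nonneg (my_pow_nonneg (hA l) k) hy p) _ (hα l)
              calc (A l ^ k).mulVec y p ≤ C * ((A l ^ k).mulVec x p) := by
                    rw [my_mulVec_apply, my_mulVec_apply, Finset.mul_sum]
                    refine Finset.sum_le_sum fun q _ => ?_
                    rw [mul_left_comm]
                    exact mul_le_mul_of_nonneg_left (hyx q) (my_pow_nonneg (hA l) k p q)
                _ ≤ C * b l k :=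
                    mul_le_mul_of_nonneg_left (my_le_vnorm _ p) hC0.le
        _ = C ^ s * ∏ l, b l k ^ α l := by
            calc ∏ l, (C * b l k) ^ α l = ∏ l, C ^ α l * b l k ^ α l :=
                  Finset.prod_congr rfl fun l _ => Real.mul_rpow hC0.le (hbnn l k)
              _ = (∏ l, C ^ α l) * ∏ l, b l k ^ α l := Finset.prod_mul_distrib
              _ = C ^ s * ∏ l, b l k ^ α l := by
                  rw [hs_def, Real.rpow_sum_of_pos hC0]
    calc a k ≤ (C ^ s * ∏ l, b l k ^ α l) ^ ((k:ℝ)⁻¹) :=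
          Real.rpow_le_rpow
            (my_vnorm_nonneg (fun p => my_mulVec_nonneg (my_pow_nonneg hB k) hx p)) h1
            (by positivity)
      _ = C ^ (s * (k:ℝ)⁻¹) * ∏ l, v l k ^ α l := by
          rw [Real.mul_rpow (Real.rpow_nonneg hC0.le _) hprodnn,
            ← Real.rpow_mul hC0.le,
            ← Real.finset_prod_rpow _ _ (fun l _ => Real.rpow_nonneg (hbnn l k) _) _]
          congr 1
          refine Finset.prod_congr rfl fun l _ => ?_
          rw [← Real.rpow_mul (hbnn l k), mul_comm (α l), Real.rpow_mul (hbnn l k)]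
  have hbdd : ∀ l, Filter.IsBoundedUnder (· ≤ ·) Filter.atTop (v l) := by
    intro l
    apply isBoundedUnder_of
    have hT : (0:ℝ) ≤ ∑ i, ∑ j, A l i j :=
      Finset.sum_nonneg fun i _ => Finset.sum_nonneg fun j _ => hA l i j
    have hX : (0:ℝ) ≤ ∑ q, x q := Finset.sum_nonneg fun q _ => hx q
    refine ⟨max ((∑ i, ∑ j, A l i j) * max 1 (∑ q, x q)) 1, fun k => ?_⟩
    match k with
    | 0 =>
      have : v l 0 = 1 := by
        show b l 0 ^ (((0:ℕ):ℝ))⁻¹ = 1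
        norm_num
      rw [this]
      exact le_max_right _ _
    | (k+1) =>
      have hk0 : ((k+1 : ℕ):ℝ) ≠ 0 := by positivity
      have h1 : b l (k+1) ≤ (∑ i, ∑ j, A l i j) ^ (k+1) * (∑ q, x q) :=
        my_vnorm_le (fun p => my_growth (hA l) hx (k+1) p)
          (mul_nonneg (pow_nonneg hT _) hX)
      have h2 : v l (k+1) ≤ ((∑ i, ∑ j, A l i j) ^ (k+1) * (∑ q, x q)) ^ (((k+1:ℕ):ℝ))⁻¹ :=
        Real.rpow_le_rpow (hbnn l (k+1)) h1 (by positivity)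
      refine le_trans h2 (le_trans ?_ (le_max_left _ _))
      rw [Real.mul_rpow (pow_nonneg hT _) hX, ← Real.rpow_natCast (∑ i, ∑ j, A l i j) (k+1),
        ← Real.rpow_mul hT, mul_inv_cancel₀ hk0, Real.rpow_one]
      apply mul_le_mul_of_nonneg_left _ hT
      rcases le_total (∑ q, x q) 1 with hX1 | hX1
      · exact le_trans (Real.rpow_le_one hX hX1 (by positivity)) (le_max_left _ _)
      · refine le_trans ?_ (le_max_right _ _)
        calc (∑ q, x q) ^ (((k+1:ℕ):ℝ))⁻¹ ≤ (∑ q, x q) ^ (1:ℝ) := by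
              apply Real.rpow_le_rpow_of_exponent_le hX1
              rw [inv_le_one_iff₀]
              right
              exact_mod_cast Nat.one_le_iff_ne_zero.mpr (Nat.succ_ne_zero k)
          _ = ∑ q, x q := Real.rpow_one _
  have hr0 : ∀ l, 0 ≤ rhox (A l) x := by
    intro l
    rw [hrv l]
    exact le_limsup_of_frequently_le (Filter.Frequently.of_forall fun k => hvnn l k) (hbdd l)
  have hkey : ∀ ε : ℝ, 0 < ε →
      Filter.atTop.limsup a ≤ (1+ε) * ∏ l, (rhox (A l) x + ε) ^ α l := by
    intro ε hε
    have hev1 : ∀ᶠ k in Filter.atTop, ∀ l, v l k < rhox (A l) x + ε := by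
      rw [Filter.eventually_all]
      intro l
      rw [hrv l] at *
      exact Filter.eventually_lt_of_limsup_lt (lt_add_of_pos_right _ hε) (hbdd l)
    have hev2 : ∀ᶠ k : ℕ in Filter.atTop, C ^ (s * (k:ℝ)⁻¹) < 1 + ε := by
      have h0 : Filter.Tendsto (fun k : ℕ => s * (k:ℝ)⁻¹) Filter.atTop (nhds 0) := by
        simpa using tendsto_const_nhds.mul (tendsto_inv_atTop_nhds_zero_nat (𝕜 := ℝ))
      have hcont : ContinuousAt (fun t : ℝ => C ^ t) 0 :=
        Real.continuousAt_const_rpow hC0.ne'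
      have htend : Filter.Tendsto (fun k : ℕ => C ^ (s * (k:ℝ)⁻¹)) Filter.atTop (nhds 1) := by
        have := hcont.tendsto.comp h0
        simpa [Real.rpow_zero, Function.comp_def] using this
      exact htend.eventually_lt_const (by linarith)
    have hcob : Filter.IsCoboundedUnder (· ≤ ·) Filter.atTop a :=
      Filter.IsBoundedUnder.isCoboundedUnder_le (isBoundedUnder_of ⟨0, fun k => hann k⟩)
    apply Filter.limsup_le_of_le hcob
    filter_upwards [hev1, hev2] with k h1 h2
    calc a k ≤ C ^ (s*(k:ℝ)⁻¹) * ∏ l, v l k ^ α l := hmain k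
      _ ≤ (1+ε) * ∏ l, (rhox (A l) x + ε) ^ α l := by
          apply mul_le_mul h2.le
          · apply Finset.prod_le_prod (fun l _ => Real.rpow_nonneg (hvnn l k) _)
              (fun l _ => Real.rpow_le_rpow (hvnn l k) (h1 l).le (hα l))
          · exact Finset.prod_nonneg fun l _ => Real.rpow_nonneg (hvnn l k) _
          · linarith
  have htendF : Filter.Tendsto (fun ε : ℝ => (1+ε) * ∏ l, (rhox (A l) x + ε) ^ α l)
      (nhdsWithin 0 (Set.Ioi 0)) (nhds (∏ l, (rhox (A l) x) ^ α l)) := by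
    have h1 : Filter.Tendsto (fun ε : ℝ => 1 + ε) (nhdsWithin 0 (Set.Ioi 0)) (nhds 1) := by
      have h : Filter.Tendsto (fun ε : ℝ => 1 + ε) (nhds 0) (nhds (1+0)) :=
        (continuous_const.add continuous_id).tendsto 0
      rw [add_zero] at h
      exact h.mono_left nhdsWithin_le_nhds
    have h2 : Filter.Tendsto (fun ε : ℝ => ∏ l, (rhox (A l) x + ε) ^ α l)
        (nhdsWithin 0 (Set.Ioi 0)) (nhds (∏ l, (rhox (A l) x) ^ α l)) := by
      apply tendsto_finset_prod
      intro l _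
      have hb2 : Filter.Tendsto (fun ε : ℝ => rhox (A l) x + ε) (nhdsWithin 0 (Set.Ioi 0))
          (nhds (rhox (A l) x)) := by
        have h : Filter.Tendsto (fun ε : ℝ => rhox (A l) x + ε) (nhds 0)
            (nhds (rhox (A l) x + 0)) := (continuous_const.add continuous_id).tendsto 0
        rw [add_zero] at h
        exact h.mono_left nhdsWithin_le_nhds
      exact ((Real.continuousAt_rpow_const _ _ (Or.inr (hα l))).tendsto.comp hb2)
    have := h1.mul h2
    simpa using this
  show rhox B x ≤ ∏ l, (rhox (A l) x) ^ α l
  rw [hra]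
  refine ge_of_tendsto htendF ?_
  filter_upwards [self_mem_nhdsWithin] with ε hε
  exact hkey ε hε
end

section
/- Let A₁,…,A_m be nonnegative n×n matrices, x ∈ ℝ_+^n, and P_j = A_j A_{j+1} ⋯ A_m A₁ ⋯ A_{j-1} the cyclic (classical) products. Then ρ_x(A₁ ∘ ⋯ ∘ A_m) ≤ ρ_x(P₁ ∘ ⋯ ∘ P_m)^{1/m} ≤ (ρ_x(P₁) ⋯ ρ_x(P_m))^{1/m}. In particular ρ_x(A∘B) ≤ ρ_x(AB ∘ BA)^{1/2} ≤ ρ_x(AB)^{1/2} ρ_x(BA)^{1/2}. -/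
open Filter Finset

/-- Cyclic classical product `P_j = A_j A_{j+1} ⋯ A_m A_1 ⋯ A_{j-1}`. -/
noncomputable def cycProd {n m : ℕ} (A : Fin m → Matrix (Fin n) (Fin n) ℝ) (j : Fin m) :
    Matrix (Fin n) (Fin n) ℝ :=
  (List.ofFn fun t : Fin m => A (j + t)).prod

section AuxAnalytic

private lemma ge_of_tendsto_pos {a : ℝ} {f : ℝ → ℝ} {b : ℝ}
    (hf : Tendsto f (nhdsWithin 0 (Set.Ioi 0)) (nhds b)) (h : ∀ ε > 0, a ≤ f ε) : a ≤ b :=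
  ge_of_tendsto hf (eventually_nhdsWithin_of_forall fun ε hε => h ε hε)

private lemma rootBound {s : ℕ → ℝ} {C K : ℝ} (h0 : ∀ k, 0 ≤ s k) (hC : 0 ≤ C) (hK : 0 ≤ K)
    (hb : ∀ k, s k ≤ C * K ^ k) : ∀ k : ℕ, s k ^ ((k : ℝ)⁻¹) ≤ max 1 C * max 1 K := by
  have h1C : (1:ℝ) ≤ max 1 C := le_max_left _ _
  have h1K : (1:ℝ) ≤ max 1 K := le_max_left _ _
  intro k
  cases k with
  | zero => simpa using by nlinarith
  | succ j =>
    set k := j + 1 with hkdef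
    have hk1 : (1:ℝ) ≤ (k:ℝ) := by exact_mod_cast Nat.succ_le_succ (Nat.zero_le j)
    have hk0 : (0:ℝ) < (k:ℝ) := lt_of_lt_of_le one_pos hk1
    have hki : 0 ≤ ((k:ℝ))⁻¹ := inv_nonneg.2 hk0.le
    have h1 : s k ^ ((k:ℝ)⁻¹) ≤ (C * K ^ k) ^ ((k:ℝ)⁻¹) :=
      Real.rpow_le_rpow (h0 k) (hb k) hki
    have h2 : (C * K ^ k) ^ ((k:ℝ)⁻¹) = C ^ ((k:ℝ)⁻¹) * K := by
      rw [Real.mul_rpow hC (pow_nonneg hK k), ← Real.rpow_natCast K k, ← Real.rpow_mul hK,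
        mul_inv_cancel₀ (ne_of_gt hk0), Real.rpow_one]
    have h3 : C ^ ((k:ℝ)⁻¹) ≤ max 1 C := by
      rcases le_total C 1 with h | h
      · exact le_trans (Real.rpow_le_one hC h hki) h1C
      · refine le_trans ?_ (le_max_right _ _)
        calc C ^ ((k:ℝ)⁻¹) ≤ C ^ (1:ℝ) :=
              Real.rpow_le_rpow_of_exponent_le h (inv_le_one_of_one_le₀ hk1)
          _ = C := Real.rpow_one C
    calc s k ^ ((k:ℝ)⁻¹) ≤ C ^ ((k:ℝ)⁻¹) * K := h1.trans h2.le
      _ ≤ max 1 C * max 1 K :=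
        mul_le_mul h3 (le_max_right _ _) hK (le_trans zero_le_one h1C)

private lemma limsup_root_nonneg {s : ℕ → ℝ} {C K : ℝ} (h0 : ∀ k, 0 ≤ s k) (hC : 0 ≤ C)
    (hK : 0 ≤ K) (hb : ∀ k, s k ≤ C * K ^ k) :
    0 ≤ Filter.atTop.limsup (fun k : ℕ => s k ^ ((k : ℝ)⁻¹)) :=
  le_limsup_of_frequently_le
    ((Filter.Eventually.of_forall fun k => Real.rpow_nonneg (h0 k) _).frequently)
    (isBoundedUnder_of ⟨max 1 C * max 1 K, rootBound h0 hC hK hb⟩)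

private lemma eventually_le_geom {s : ℕ → ℝ} {C K r : ℝ} (h0 : ∀ k, 0 ≤ s k) (hC : 0 ≤ C)
    (hK : 0 ≤ K) (hb : ∀ k, s k ≤ C * K ^ k) (hr0 : 0 < r)
    (h : Filter.atTop.limsup (fun k : ℕ => s k ^ ((k : ℝ)⁻¹)) < r) :
    ∀ᶠ k in atTop, s k ≤ r ^ k := by
  have hbdd : IsBoundedUnder (· ≤ ·) atTop (fun k : ℕ => s k ^ ((k:ℝ)⁻¹)) :=
    isBoundedUnder_of ⟨max 1 C * max 1 K, rootBound h0 hC hK hb⟩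
  filter_upwards [eventually_lt_of_limsup_lt h hbdd, eventually_ge_atTop 1] with k hk hk1
  have hkne : k ≠ 0 := by omega
  have : s k = (s k ^ ((k:ℝ)⁻¹)) ^ (k:ℕ) := (Real.rpow_inv_natCast_pow (h0 k) hkne).symm
  rw [this]
  exact pow_le_pow_left₀ (Real.rpow_nonneg (h0 k) _) hk.le k

private lemma limsup_root_le {s : ℕ → ℝ} {C r : ℝ} (h0 : ∀ k, 0 ≤ s k) (hC : 0 ≤ C) (hr : 0 ≤ r)
    (h : ∀ᶠ k in atTop, s k ≤ C * r ^ k) :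
    Filter.atTop.limsup (fun k : ℕ => s k ^ ((k : ℝ)⁻¹)) ≤ r := by
  have hcob : IsCoboundedUnder (· ≤ ·) atTop (fun k : ℕ => s k ^ ((k:ℝ)⁻¹)) :=
    isCoboundedUnder_le_of_le _ (x := 0) (fun k => Real.rpow_nonneg (h0 k) _)
  have hinv : ∀ k : ℕ, 1 ≤ k → ((k:ℝ))⁻¹ ≠ 0 := by
    intro k hk1
    exact inv_ne_zero (Nat.cast_ne_zero.2 (by omega))
  rcases le_or_gt C 0 with hC0 | hC0
  · have hCz : C = 0 := le_antisymm hC0 hC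
    subst hCz
    apply limsup_le_of_le hcob
    filter_upwards [h, eventually_ge_atTop 1] with k hk hk1
    have hs : s k = 0 := le_antisymm (by simpa using hk) (h0 k)
    rw [hs, Real.zero_rpow (hinv k hk1)]
    exact hr
  rcases eq_or_lt_of_le hr with hr0 | hr0
  · rw [← hr0]
    apply limsup_le_of_le hcob
    filter_upwards [h, eventually_ge_atTop 1] with k hk hk1
    have hs : s k = 0 := le_antisymm (by
      have h00 : (0:ℝ) ^ k = 0 := zero_pow (by omega)
      calc s k ≤ C * (0:ℝ) ^ k := by rw [hr0]; exact hk
        _ = 0 := by rw [h00, mul_zero]) (h0 k)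
    rw [hs, Real.zero_rpow (hinv k hk1)]
  · -- main case C > 0, r > 0
    have key : ∀ ε > (0:ℝ), Filter.atTop.limsup (fun k : ℕ => s k ^ ((k : ℝ)⁻¹)) ≤ r + ε := by
      intro ε hε
      have hT : Tendsto (fun k : ℕ => C ^ ((k:ℝ)⁻¹)) atTop (nhds 1) := by
        have h1 := (Real.continuousAt_const_rpow (ne_of_gt hC0)).tendsto.comp
          tendsto_inv_atTop_nhds_zero_nat
        simpa [Function.comp_def, Real.rpow_zero] using h1
      have hev : ∀ᶠ k : ℕ in atTop, C ^ ((k:ℝ)⁻¹) < 1 + ε / r :=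
        hT.eventually_lt_const (by have := div_pos hε hr0; linarith)
      apply limsup_le_of_le hcob
      filter_upwards [h, hev, eventually_ge_atTop 1] with k hk hevk hk1
      have hk0 : (0:ℝ) < (k:ℝ) := by
        have : (0:ℕ) < k := by omega
        exact_mod_cast this
      have hki : 0 ≤ ((k:ℝ))⁻¹ := inv_nonneg.2 hk0.le
      have h2 : (C * r ^ k) ^ ((k:ℝ)⁻¹) = C ^ ((k:ℝ)⁻¹) * r := by
        rw [Real.mul_rpow hC (pow_nonneg hr k), ← Real.rpow_natCast r k, ← Real.rpow_mul hr,
          mul_inv_cancel₀ (ne_of_gt hk0), Real.rpow_one]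
      calc s k ^ ((k:ℝ)⁻¹) ≤ (C * r ^ k) ^ ((k:ℝ)⁻¹) := Real.rpow_le_rpow (h0 k) hk hki
        _ = C ^ ((k:ℝ)⁻¹) * r := h2
        _ ≤ (1 + ε / r) * r := mul_le_mul_of_nonneg_right hevk.le hr
        _ = r + ε := by field_simp
    refine ge_of_tendsto_pos ?_ key
    have hc : Tendsto (fun ε : ℝ => r + ε) (nhds 0) (nhds r) := by
      simpa using (continuous_add_left r).tendsto (0:ℝ)
    exact hc.mono_left nhdsWithin_le_nhds

end AuxAnalytic


section AuxMatrix
open Matrix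

variable {n : ℕ}

private lemma vnorm_nonneg_s17 {v : Fin n → ℝ} (h : ∀ i, 0 ≤ v i) : 0 ≤ vnorm v :=
  Real.iSup_nonneg h

private lemma le_vnorm (v : Fin n → ℝ) (i : Fin n) : v i ≤ vnorm v :=
  le_ciSup (Set.Finite.bddAbove (Set.finite_range v)) i

private lemma vnorm_le {v : Fin n → ℝ} {a : ℝ} (h : ∀ i, v i ≤ a) (ha : 0 ≤ a) : vnorm v ≤ a :=
  Real.iSup_le h ha

private lemma mulVec_apply' (M : Matrix (Fin n) (Fin n) ℝ) (v : Fin n → ℝ) (i : Fin n) :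
    M.mulVec v i = ∑ j, M i j * v j := rfl

private noncomputable def Knorm (M : Matrix (Fin n) (Fin n) ℝ) : ℝ := ∑ p, ∑ q, M p q

private lemma Knorm_nonneg {M : Matrix (Fin n) (Fin n) ℝ} (hM : ∀ i j, 0 ≤ M i j) :
    0 ≤ Knorm M :=
  Finset.sum_nonneg fun p _ => Finset.sum_nonneg fun q _ => hM p q

private lemma row_le_Knorm {M : Matrix (Fin n) (Fin n) ℝ} (hM : ∀ i j, 0 ≤ M i j) (i : Fin n) :
    ∑ j, M i j ≤ Knorm M :=
  Finset.single_le_sum (f := fun p => ∑ q, M p q)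
    (fun p _ => Finset.sum_nonneg fun q _ => hM p q) (Finset.mem_univ i)

private lemma pow_entry_nonneg {M : Matrix (Fin n) (Fin n) ℝ} (hM : ∀ i j, 0 ≤ M i j) :
    ∀ k i j, 0 ≤ (M ^ k) i j := by
  intro k
  induction k with
  | zero =>
    intro i j
    rw [pow_zero]
    by_cases h : i = j <;> simp [Matrix.one_apply, h]
  | succ k ih =>
    intro i j
    rw [pow_succ, Matrix.mul_apply]
    exact Finset.sum_nonneg fun r _ => mul_nonneg (ih i r) (hM r j)

private lemma pow_entry_mono {M N : Matrix (Fin n) (Fin n) ℝ} (hM : ∀ i j, 0 ≤ M i j)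
    (hMN : ∀ i j, M i j ≤ N i j) : ∀ k i j, (M ^ k) i j ≤ (N ^ k) i j := by
  have hN : ∀ i j, 0 ≤ N i j := fun i j => (hM i j).trans (hMN i j)
  intro k
  induction k with
  | zero => intro i j; rw [pow_zero, pow_zero]
  | succ k ih =>
    intro i j
    rw [pow_succ, pow_succ, Matrix.mul_apply, Matrix.mul_apply]
    exact Finset.sum_le_sum fun r _ =>
      mul_le_mul (ih i r) (hMN r j) (hM r j) (pow_entry_nonneg hN k i r)

private lemma mulVec_nonneg_pt {M : Matrix (Fin n) (Fin n) ℝ} {v : Fin n → ℝ}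
    (hM : ∀ i j, 0 ≤ M i j) (hv : ∀ i, 0 ≤ v i) (i : Fin n) : 0 ≤ M.mulVec v i := by
  rw [mulVec_apply']
  exact Finset.sum_nonneg fun j _ => mul_nonneg (hM i j) (hv j)

private lemma pow_mulVec_nonneg {M : Matrix (Fin n) (Fin n) ℝ} {v : Fin n → ℝ}
    (hM : ∀ i j, 0 ≤ M i j) (hv : ∀ i, 0 ≤ v i) (k : ℕ) (i : Fin n) :
    0 ≤ (M ^ k).mulVec v i :=
  mulVec_nonneg_pt (pow_entry_nonneg hM k) hv i

private lemma pow_mulVec_le {M : Matrix (Fin n) (Fin n) ℝ} {v : Fin n → ℝ}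
    (hM : ∀ i j, 0 ≤ M i j) (hv : ∀ i, 0 ≤ v i) :
    ∀ u i, (M ^ u).mulVec v i ≤ Knorm M ^ u * vnorm v := by
  intro u
  induction u with
  | zero =>
    intro i
    rw [pow_zero, Matrix.one_mulVec, pow_zero, one_mul]
    exact le_vnorm v i
  | succ u ih =>
    intro i
    have hw : (M ^ (u + 1)).mulVec v = M.mulVec ((M ^ u).mulVec v) := by
      rw [pow_succ']
      exact (Matrix.mulVec_mulVec v M (M ^ u)).symm
    have hKu : 0 ≤ Knorm M ^ u * vnorm v :=
      mul_nonneg (pow_nonneg (Knorm_nonneg hM) u) (vnorm_nonneg_s17 hv)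
    rw [hw, mulVec_apply']
    calc ∑ j, M i j * (M ^ u).mulVec v j
        ≤ ∑ j, M i j * (Knorm M ^ u * vnorm v) :=
          Finset.sum_le_sum fun j _ => mul_le_mul_of_nonneg_left (ih j) (hM i j)
      _ = (∑ j, M i j) * (Knorm M ^ u * vnorm v) := by rw [Finset.sum_mul]
      _ ≤ Knorm M * (Knorm M ^ u * vnorm v) :=
          mul_le_mul_of_nonneg_right (row_le_Knorm hM i) hKu
      _ = Knorm M ^ (u + 1) * vnorm v := by ring

private lemma snorm_le {M : Matrix (Fin n) (Fin n) ℝ} {x : Fin n → ℝ}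
    (hM : ∀ i j, 0 ≤ M i j) (hx : ∀ i, 0 ≤ x i) (k : ℕ) :
    vnorm ((M ^ k).mulVec x) ≤ vnorm x * Knorm M ^ k :=
  vnorm_le (fun i => (pow_mulVec_le hM hx k i).trans_eq (mul_comm _ _))
    (mul_nonneg (vnorm_nonneg_s17 hx) (pow_nonneg (Knorm_nonneg hM) k))

private lemma snorm_nonneg {M : Matrix (Fin n) (Fin n) ℝ} {x : Fin n → ℝ}
    (hM : ∀ i j, 0 ≤ M i j) (hx : ∀ i, 0 ≤ x i) (k : ℕ) :
    0 ≤ vnorm ((M ^ k).mulVec x) :=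
  vnorm_nonneg_s17 (pow_mulVec_nonneg hM hx k)

private lemma rhox_nonneg' {M : Matrix (Fin n) (Fin n) ℝ} {x : Fin n → ℝ}
    (hM : ∀ i j, 0 ≤ M i j) (hx : ∀ i, 0 ≤ x i) : 0 ≤ rhox M x := by
  unfold rhox
  exact limsup_root_nonneg (snorm_nonneg hM hx) (vnorm_nonneg_s17 hx) (Knorm_nonneg hM)
    (snorm_le hM hx)

private lemma list_prod_entry_nonneg :
    ∀ l : List (Matrix (Fin n) (Fin n) ℝ), (∀ M ∈ l, ∀ i j, 0 ≤ M i j) →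
      ∀ i j, 0 ≤ l.prod i j := by
  intro l
  induction l with
  | nil =>
    intro _ i j
    rw [List.prod_nil]
    by_cases h : i = j <;> simp [Matrix.one_apply, h]
  | cons M l ih =>
    intro h i j
    rw [List.prod_cons, Matrix.mul_apply]
    exact Finset.sum_nonneg fun r _ => mul_nonneg (h M (List.mem_cons_self) i r)
      (ih (fun M' hM' => h M' (List.mem_cons_of_mem M hM')) r j)

end AuxMatrix


section AuxComb

private lemma sum_prod_le_prod_sum {ι κ : Type*} [DecidableEq ι] {s : Finset ι} {t : Finset κ}
    (hs : s.Nonempty) {u : ι → κ → ℝ} (hu : ∀ j ∈ s, ∀ r ∈ t, 0 ≤ u j r) :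
    ∑ r ∈ t, ∏ j ∈ s, u j r ≤ ∏ j ∈ s, ∑ r ∈ t, u j r := by
  obtain ⟨j₀, hj₀⟩ := hs
  calc ∑ r ∈ t, ∏ j ∈ s, u j r
      = ∑ r ∈ t, u j₀ r * ∏ j ∈ s.erase j₀, u j r :=
        Finset.sum_congr rfl fun r _ => (Finset.mul_prod_erase s (fun j => u j r) hj₀).symm
    _ ≤ ∑ r ∈ t, u j₀ r * ∏ j ∈ s.erase j₀, (∑ r' ∈ t, u j r') := by
        refine Finset.sum_le_sum fun r hr => mul_le_mul_of_nonneg_left ?_ (hu j₀ hj₀ r hr)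
        refine Finset.prod_le_prod (fun j hj => hu j (Finset.mem_of_mem_erase hj) r hr)
          (fun j hj => ?_)
        exact Finset.single_le_sum
          (fun r' hr' => hu j (Finset.mem_of_mem_erase hj) r' hr') hr
    _ = (∑ r ∈ t, u j₀ r) * ∏ j ∈ s.erase j₀, ∑ r' ∈ t, u j r' := by rw [← Finset.sum_mul]
    _ = ∏ j ∈ s, ∑ r' ∈ t, u j r' := Finset.mul_prod_erase s (fun j => ∑ r' ∈ t, u j r') hj₀

private lemma pow_div_le {L : ℝ} (hL : 0 < L) {m q r k : ℕ} (hm : 0 < m) (hk : m * q + r = k)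
    (hr : r < m) : L ^ q ≤ max 1 L⁻¹ * (L ^ ((m:ℝ)⁻¹)) ^ k := by
  have hmR : (0:ℝ) < (m:ℝ) := by exact_mod_cast hm
  have e : (L ^ ((m:ℝ)⁻¹)) ^ k = L ^ ((q:ℝ) + r / m) := by
    rw [← Real.rpow_natCast (L ^ ((m:ℝ)⁻¹)) k, ← Real.rpow_mul hL.le]
    congr 1
    field_simp
    push_cast [← hk]
    ring
  rw [e, Real.rpow_add hL, Real.rpow_natCast]
  have hrm0 : 0 ≤ (r:ℝ) / m := by positivity
  have hrm1 : (r:ℝ) / m ≤ 1 := by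
    rw [div_le_one hmR]; exact_mod_cast hr.le
  have hLq : (0:ℝ) < L ^ q := pow_pos hL q
  rcases le_total 1 L with h | h
  · have h1 : (1:ℝ) ≤ L ^ ((r:ℝ)/m) := by
      calc (1:ℝ) = L ^ (0:ℝ) := (Real.rpow_zero L).symm
        _ ≤ L ^ ((r:ℝ)/m) := Real.rpow_le_rpow_of_exponent_le h hrm0
    have h2 : (1:ℝ) ≤ max 1 L⁻¹ := le_max_left _ _
    calc L ^ q = 1 * (L ^ q * 1) := by ring
      _ ≤ max 1 L⁻¹ * (L ^ q * L ^ ((r:ℝ)/m)) := by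
          refine mul_le_mul h2 ?_ (by positivity) (le_trans zero_le_one h2)
          exact mul_le_mul_of_nonneg_left h1 hLq.le
  · have h1 : L ≤ L ^ ((r:ℝ)/m) := by
      calc L = L ^ (1:ℝ) := (Real.rpow_one L).symm
        _ ≤ L ^ ((r:ℝ)/m) := Real.rpow_le_rpow_of_exponent_ge hL h hrm1
    have h2' : (1:ℝ) ≤ L⁻¹ := by
      rw [← inv_one]
      exact inv_anti₀ hL h
    rw [max_eq_right h2']
    have h3 : L⁻¹ * (L ^ q * L) ≤ L⁻¹ * (L ^ q * L ^ ((r:ℝ)/m)) :=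
      mul_le_mul_of_nonneg_left (mul_le_mul_of_nonneg_left h1 hLq.le) (inv_nonneg.2 hL.le)
    have h4 : L⁻¹ * (L ^ q * L) = L ^ q := by
      field_simp
    linarith

private lemma had_mul_le {n m : ℕ} (hm : 0 < m) {B C : Fin m → Matrix (Fin n) (Fin n) ℝ}
    (hB : ∀ j p q, 0 ≤ B j p q) (hC : ∀ j p q, 0 ≤ C j p q) (p q : Fin n) :
    ∑ r, (∏ j, B j p r) * (∏ j, C j r q) ≤ ∏ j, (B j * C j) p q := by
  haveI : Nonempty (Fin m) := ⟨⟨0, hm⟩⟩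
  calc ∑ r, (∏ j, B j p r) * (∏ j, C j r q)
      = ∑ r, ∏ j, (B j p r * C j r q) :=
        Finset.sum_congr rfl fun r _ => Finset.prod_mul_distrib.symm
    _ ≤ ∏ j, ∑ r, (B j p r * C j r q) :=
        sum_prod_le_prod_sum Finset.univ_nonempty
          (fun j _ r _ => mul_nonneg (hB j p r) (hC j r q))
    _ = ∏ j, (B j * C j) p q :=
        Finset.prod_congr rfl fun j _ => (Matrix.mul_apply).symm

end AuxComb

section MainLemma

open Fin.NatCast

private lemma main_ineq {n m : ℕ} (hm : 0 < m) (A : Fin m → Matrix (Fin n) (Fin n) ℝ)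
    (hA : ∀ l i j, 0 ≤ A l i j) (x : Fin n → ℝ) (hx : ∀ i, 0 ≤ x i) :
    rhox (fun p q => ∏ l, A l p q) x ≤
        (rhox (fun p q => ∏ j, cycProd A j p q) x) ^ ((m : ℝ)⁻¹) ∧
    rhox (fun p q => ∏ j, cycProd A j p q) x ≤ ∏ j, rhox (cycProd A j) x := by
  haveI : NeZero m := ⟨hm.ne'⟩
  haveI : Nonempty (Fin m) := ⟨⟨0, hm⟩⟩
  set H : Matrix (Fin n) (Fin n) ℝ := fun p q => ∏ l, A l p q with hH
  set Q : Matrix (Fin n) (Fin n) ℝ := fun p q => ∏ j, cycProd A j p q with hQ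
  have hHnn : ∀ p q, 0 ≤ H p q := fun p q => Finset.prod_nonneg fun l _ => hA l p q
  have hPnn : ∀ (j : Fin m) p q, 0 ≤ cycProd A j p q := by
    intro j p q
    apply list_prod_entry_nonneg
    intro M hM
    simp only [List.mem_ofFn] at hM
    obtain ⟨t, rfl⟩ := hM
    exact fun i j' => hA _ i j'
  have hQnn : ∀ p q, 0 ≤ Q p q := fun p q => Finset.prod_nonneg fun j _ => hPnn j p q
  -- partial cyclic products
  set W : ℕ → Fin m → Matrix (Fin n) (Fin n) ℝ :=
    fun t j => ((List.range t).map fun s : ℕ => A (j + (s : Fin m))).prod with hW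
  have hWnn : ∀ t (j : Fin m) p q, 0 ≤ W t j p q := by
    intro t j p q
    apply list_prod_entry_nonneg
    intro M hM
    simp only [List.mem_map, List.mem_range] at hM
    obtain ⟨s, _, rfl⟩ := hM
    exact fun i j' => hA _ i j'
  have hWsucc : ∀ t (j : Fin m), W (t + 1) j = W t j * A (j + (t : Fin m)) := by
    intro t j
    simp [hW, List.range_succ]
  have hWm : ∀ j : Fin m, W m j = cycProd A j := by
    intro j
    simp only [hW, cycProd]
    congr 1
    apply List.ext_getElem
    · simp
    · intro i h1 h2
      have him : i < m := by simpa using h1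
      simp only [List.getElem_map, List.getElem_range, List.getElem_ofFn]
      have hcast : ((i : ℕ) : Fin m) = ⟨i, him⟩ := by
        ext
        simp [Fin.val_natCast, Nat.mod_eq_of_lt him]
      rw [hcast]
  have hreidx : ∀ (t : Fin m) (f : Fin m → ℝ), ∏ j, f (j + t) = ∏ l, f l := by
    intro t f
    exact Equiv.prod_comp (Equiv.addRight t) f
  -- H ^ t dominated by Hadamard product of partial cyclic products
  have claim1 : ∀ t p q, (H ^ t) p q ≤ ∏ j, W t j p q := by
    intro t
    induction t with
    | zero =>
      intro p q
      have hW0 : ∀ j : Fin m, W 0 j = 1 := fun j => by simp [hW]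
      rw [pow_zero]
      simp only [hW0]
      by_cases h : p = q
      · simp [Matrix.one_apply, h]
      · simp [Matrix.one_apply, h, Finset.prod_const, zero_pow hm.ne']
    | succ t ih =>
      intro p q
      rw [pow_succ, Matrix.mul_apply]
      have hHrq : ∀ r, H r q = ∏ j, A (j + (t : Fin m)) r q :=
        fun r => (hreidx _ fun l => A l r q).symm
      calc ∑ r, (H ^ t) p r * H r q
          ≤ ∑ r, (∏ j, W t j p r) * (∏ j, A (j + (t : Fin m)) r q) := by
            refine Finset.sum_le_sum fun r _ => ?_
            rw [hHrq r]
            exact mul_le_mul_of_nonneg_right (ih p r)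
              (Finset.prod_nonneg fun j _ => hA _ r q)
        _ ≤ ∏ j, (W t j * A (j + (t : Fin m))) p q :=
            had_mul_le hm (hWnn t) (fun j p' q' => hA (j + (t : Fin m)) p' q') p q
        _ = ∏ j, W (t + 1) j p q :=
            Finset.prod_congr rfl fun j _ => by rw [hWsucc t j]
  have claim2 : ∀ p q, (H ^ m) p q ≤ Q p q := by
    intro p q
    refine (claim1 m p q).trans_eq ?_
    simp only [hQ]
    exact Finset.prod_congr rfl fun j _ => by rw [hWm j]
  -- Q ^ k dominated by Hadamard product of P j ^ k
  have claim3 : ∀ k p q, (Q ^ k) p q ≤ ∏ j, ((cycProd A j) ^ k) p q := by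
    intro k
    induction k with
    | zero =>
      intro p q
      rw [pow_zero]
      simp only [pow_zero]
      by_cases h : p = q
      · simp [Matrix.one_apply, h]
      · simp [Matrix.one_apply, h, Finset.prod_const, zero_pow hm.ne']
    | succ k ih =>
      intro p q
      rw [pow_succ, Matrix.mul_apply]
      calc ∑ r, (Q ^ k) p r * Q r q
          ≤ ∑ r, (∏ j, ((cycProd A j) ^ k) p r) * (∏ j, cycProd A j r q) := by
            refine Finset.sum_le_sum fun r _ => ?_
            have hQrq : Q r q = ∏ j, cycProd A j r q := by rw [hQ]
            rw [hQrq]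
            exact mul_le_mul_of_nonneg_right (ih p r)
              (Finset.prod_nonneg fun j _ => hPnn j r q)
        _ ≤ ∏ j, ((cycProd A j) ^ k * cycProd A j) p q :=
            had_mul_le hm (fun j => pow_entry_nonneg (hPnn j) k) hPnn p q
        _ = ∏ j, ((cycProd A j) ^ (k + 1)) p q :=
            Finset.prod_congr rfl fun j _ => by rw [pow_succ]
  have rQ0 : 0 ≤ rhox Q x := rhox_nonneg' hQnn hx
  have rj0 : ∀ j : Fin m, 0 ≤ rhox (cycProd A j) x := fun j => rhox_nonneg' (hPnn j) hx
  -- PART B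
  have partB : rhox Q x ≤ ∏ j, rhox (cycProd A j) x := by
    set y : Fin n → ℝ := fun q => x q ^ ((m:ℝ)⁻¹) with hy
    have hynn : ∀ q, 0 ≤ y q := fun q => Real.rpow_nonneg (hx q) _
    set c : ℝ := 1 + ∑ q, (if x q = 0 then 0 else x q ^ ((m:ℝ)⁻¹ - 1)) with hc
    have hcsum : 0 ≤ ∑ q, (if x q = 0 then 0 else x q ^ ((m:ℝ)⁻¹ - 1)) :=
      Finset.sum_nonneg fun q _ => by
        split
        · exact le_refl 0
        · exact Real.rpow_nonneg (hx q) _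
    have hc0 : 0 ≤ c := by rw [hc]; linarith
    have hyc : ∀ q, y q ≤ c * x q := by
      intro q
      by_cases hxq : x q = 0
      · have hmne : ((m:ℝ))⁻¹ ≠ 0 := by
          have : (0:ℝ) < (m:ℝ) := by exact_mod_cast hm
          exact inv_ne_zero this.ne'
        simp only [hy]
        rw [hxq, Real.zero_rpow hmne, mul_zero]
      · have hxq0 : 0 < x q := lt_of_le_of_ne (hx q) (Ne.symm hxq)
        have e1 : y q = x q ^ ((m:ℝ)⁻¹ - 1) * x q := by
          simp only [hy]
          rw [Real.rpow_sub hxq0, Real.rpow_one, div_mul_cancel₀]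
          exact ne_of_gt hxq0
        rw [e1]
        refine mul_le_mul_of_nonneg_right ?_ (hx q)
        calc x q ^ ((m:ℝ)⁻¹ - 1)
            = (if x q = 0 then 0 else x q ^ ((m:ℝ)⁻¹ - 1)) := by rw [if_neg hxq]
          _ ≤ ∑ q', (if x q' = 0 then 0 else x q' ^ ((m:ℝ)⁻¹ - 1)) :=
              Finset.single_le_sum
                (f := fun q' => if x q' = 0 then 0 else x q' ^ ((m:ℝ)⁻¹ - 1))
                (fun q' _ => by
                  by_cases hq' : x q' = 0 <;>
                    simp [hq', Real.rpow_nonneg (hx q')]) (Finset.mem_univ q)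
          _ ≤ c := by rw [hc]; linarith
    have key : ∀ ε > (0:ℝ), rhox Q x ≤ ∏ j, (rhox (cycProd A j) x + ε) := by
      intro ε hε
      have hLpos : ∀ j : Fin m, 0 < rhox (cycProd A j) x + ε := fun j => by
        have := rj0 j; linarith
      have hev : ∀ᶠ k in Filter.atTop, ∀ j : Fin m,
          vnorm ((cycProd A j ^ k).mulVec x) ≤ (rhox (cycProd A j) x + ε) ^ k := by
        rw [Filter.eventually_all]
        intro j
        refine eventually_le_geom (snorm_nonneg (hPnn j) hx) (vnorm_nonneg_s17 hx)
          (Knorm_nonneg (hPnn j)) (snorm_le (hPnn j) hx) (hLpos j) ?_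
        have e : Filter.atTop.limsup
            (fun k : ℕ => (vnorm ((cycProd A j ^ k).mulVec x)) ^ ((k:ℝ)⁻¹))
            = rhox (cycProd A j) x := rfl
        rw [e]
        linarith
      have hevQ : ∀ᶠ k in Filter.atTop,
          vnorm ((Q ^ k).mulVec x) ≤ c ^ m * (∏ j, (rhox (cycProd A j) x + ε)) ^ k := by
        filter_upwards [hev] with k hk
        have hbd1 : ∀ p, (Q ^ k).mulVec x p ≤ ∏ j, vnorm ((cycProd A j ^ k).mulVec y) := by
          intro p
          rw [mulVec_apply']
          calc ∑ r, (Q ^ k) p r * x r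
              ≤ ∑ r, (∏ j, ((cycProd A j) ^ k) p r) * x r :=
                Finset.sum_le_sum fun r _ =>
                  mul_le_mul_of_nonneg_right (claim3 k p r) (hx r)
            _ = ∑ r, ∏ j, (((cycProd A j) ^ k) p r * y r) := by
                refine Finset.sum_congr rfl fun r _ => ?_
                rw [Finset.prod_mul_distrib, Finset.prod_const, Finset.card_univ,
                  Fintype.card_fin]
                congr 1
                exact (Real.rpow_inv_natCast_pow (hx r) hm.ne').symm
            _ ≤ ∏ j, ∑ r, (((cycProd A j) ^ k) p r * y r) :=
                sum_prod_le_prod_sum Finset.univ_nonempty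
                  (fun j _ r _ => mul_nonneg (pow_entry_nonneg (hPnn j) k p r) (hynn r))
            _ = ∏ j, ((cycProd A j) ^ k).mulVec y p :=
                Finset.prod_congr rfl fun j _ => (mulVec_apply' _ _ _).symm
            _ ≤ ∏ j, vnorm (((cycProd A j) ^ k).mulVec y) :=
                Finset.prod_le_prod (fun j _ => pow_mulVec_nonneg (hPnn j) hynn k p)
                  (fun j _ => le_vnorm _ p)
        have hbd2 : ∀ j : Fin m,
            vnorm ((cycProd A j ^ k).mulVec y) ≤ c * vnorm ((cycProd A j ^ k).mulVec x) := by
          intro j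
          refine vnorm_le (fun p => ?_) (mul_nonneg hc0 (snorm_nonneg (hPnn j) hx k))
          rw [mulVec_apply']
          calc ∑ r, ((cycProd A j) ^ k) p r * y r
              ≤ ∑ r, ((cycProd A j) ^ k) p r * (c * x r) :=
                Finset.sum_le_sum fun r _ =>
                  mul_le_mul_of_nonneg_left (hyc r) (pow_entry_nonneg (hPnn j) k p r)
            _ = c * ∑ r, ((cycProd A j) ^ k) p r * x r := by
                rw [Finset.mul_sum]
                exact Finset.sum_congr rfl fun r _ => by ring
            _ = c * ((cycProd A j) ^ k).mulVec x p := by rw [mulVec_apply']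
            _ ≤ c * vnorm (((cycProd A j) ^ k).mulVec x) :=
                mul_le_mul_of_nonneg_left (le_vnorm _ p) hc0
        calc vnorm ((Q ^ k).mulVec x)
            ≤ ∏ j, vnorm ((cycProd A j ^ k).mulVec y) :=
              vnorm_le hbd1
                (Finset.prod_nonneg fun j _ =>
                  vnorm_nonneg_s17 (pow_mulVec_nonneg (hPnn j) hynn k))
          _ ≤ ∏ j, (c * vnorm ((cycProd A j ^ k).mulVec x)) :=
              Finset.prod_le_prod
                (fun j _ => vnorm_nonneg_s17 (pow_mulVec_nonneg (hPnn j) hynn k))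
                (fun j _ => hbd2 j)
          _ = c ^ m * ∏ j, vnorm ((cycProd A j ^ k).mulVec x) := by
              rw [Finset.prod_mul_distrib, Finset.prod_const, Finset.card_univ,
                Fintype.card_fin]
          _ ≤ c ^ m * ∏ j, (rhox (cycProd A j) x + ε) ^ k := by
              refine mul_le_mul_of_nonneg_left ?_ (pow_nonneg hc0 m)
              exact Finset.prod_le_prod (fun j _ => snorm_nonneg (hPnn j) hx k)
                (fun j _ => hk j)
          _ = c ^ m * (∏ j, (rhox (cycProd A j) x + ε)) ^ k := by rw [Finset.prod_pow]
      have hfin := limsup_root_le (snorm_nonneg hQnn hx) (pow_nonneg hc0 m)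
        (Finset.prod_nonneg fun j _ => (hLpos j).le) hevQ
      have e : rhox Q x = Filter.atTop.limsup
          (fun k : ℕ => (vnorm ((Q ^ k).mulVec x)) ^ ((k:ℝ)⁻¹)) := rfl
      rw [e]
      exact hfin
    have hto : Filter.Tendsto (fun ε : ℝ => ∏ j, (rhox (cycProd A j) x + ε))
        (nhdsWithin 0 (Set.Ioi 0)) (nhds (∏ j, rhox (cycProd A j) x)) := by
      have hc2 : Continuous fun ε : ℝ => ∏ j, (rhox (cycProd A j) x + ε) :=
        continuous_finset_prod _ fun j _ => continuous_const.add continuous_id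
      have h3 := hc2.tendsto 0
      simp only [add_zero] at h3
      exact h3.mono_left nhdsWithin_le_nhds
    exact ge_of_tendsto_pos hto key
  -- PART A
  have partA : rhox H x ≤ rhox Q x ^ ((m:ℝ)⁻¹) := by
    have key : ∀ ε > (0:ℝ), rhox H x ≤ (rhox Q x + ε) ^ ((m:ℝ)⁻¹) := by
      intro ε hε
      set L := rhox Q x + ε with hLdef
      have hL : 0 < L := by rw [hLdef]; linarith
      have hevQ : ∀ᶠ k in Filter.atTop, vnorm ((Q ^ k).mulVec x) ≤ L ^ k := by
        refine eventually_le_geom (snorm_nonneg hQnn hx) (vnorm_nonneg_s17 hx)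
          (Knorm_nonneg hQnn) (snorm_le hQnn hx) hL ?_
        have e : Filter.atTop.limsup
            (fun k : ℕ => (vnorm ((Q ^ k).mulVec x)) ^ ((k:ℝ)⁻¹)) = rhox Q x := rfl
        rw [e, hLdef]
        linarith
      obtain ⟨N, hN⟩ := Filter.eventually_atTop.1 hevQ
      set KH := max 1 (Knorm H) with hKH
      have hKH1 : (1:ℝ) ≤ KH := le_max_left _ _
      have hC0 : 0 ≤ KH ^ m * max 1 L⁻¹ := by positivity
      have hr0 : 0 ≤ L ^ ((m:ℝ)⁻¹) := Real.rpow_nonneg hL.le _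
      have hev : ∀ᶠ k in Filter.atTop,
          vnorm ((H ^ k).mulVec x) ≤ (KH ^ m * max 1 L⁻¹) * (L ^ ((m:ℝ)⁻¹)) ^ k := by
        filter_upwards [Filter.eventually_ge_atTop (m * N)] with k hk
        have hqr : m * (k / m) + k % m = k := Nat.div_add_mod k m
        have hrm : k % m < m := Nat.mod_lt _ hm
        have hqN : N ≤ k / m := (Nat.le_div_iff_mul_le hm).2 (by rw [Nat.mul_comm]; exact hk)
        have hsplit : (H ^ k).mulVec x = (H ^ (k % m)).mulVec ((H ^ (m * (k / m))).mulVec x) := by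
          conv_lhs => rw [show k = k % m + m * (k / m) from (Nat.mod_add_div k m).symm]
          rw [pow_add]
          exact (Matrix.mulVec_mulVec x (H ^ (k % m)) (H ^ (m * (k / m)))).symm
        have hs1 : vnorm ((H ^ k).mulVec x)
            ≤ Knorm H ^ (k % m) * vnorm ((H ^ (m * (k / m))).mulVec x) := by
          rw [hsplit]
          exact vnorm_le (pow_mulVec_le hHnn (pow_mulVec_nonneg hHnn hx (m * (k / m))) (k % m))
            (mul_nonneg (pow_nonneg (Knorm_nonneg hHnn) (k % m))
              (vnorm_nonneg_s17 (pow_mulVec_nonneg hHnn hx (m * (k / m)))))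
        have hs2 : vnorm ((H ^ (m * (k / m))).mulVec x) ≤ vnorm ((Q ^ (k / m)).mulVec x) := by
          have hmono : ∀ p, (H ^ (m * (k / m))).mulVec x p ≤ (Q ^ (k / m)).mulVec x p := by
            intro p
            rw [mulVec_apply', mulVec_apply']
            refine Finset.sum_le_sum fun rr _ => mul_le_mul_of_nonneg_right ?_ (hx rr)
            have e2 : (H ^ (m * (k / m))) p rr = ((H ^ m) ^ (k / m)) p rr := by
              rw [← pow_mul]
            rw [e2]
            exact pow_entry_mono (fun i j => pow_entry_nonneg hHnn m i j) claim2 (k / m) p rr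
          exact vnorm_le (fun p => (hmono p).trans (le_vnorm _ p))
            (vnorm_nonneg_s17 (pow_mulVec_nonneg hQnn hx (k / m)))
        have hs3 : vnorm ((Q ^ (k / m)).mulVec x) ≤ L ^ (k / m) := hN (k / m) hqN
        have hs4 : L ^ (k / m) ≤ max 1 L⁻¹ * (L ^ ((m:ℝ)⁻¹)) ^ k := pow_div_le hL hm hqr hrm
        have hKr : Knorm H ^ (k % m) ≤ KH ^ m := by
          calc Knorm H ^ (k % m)
              ≤ KH ^ (k % m) := pow_le_pow_left₀ (Knorm_nonneg hHnn) (le_max_right _ _) _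
            _ ≤ KH ^ m := pow_le_pow_right₀ hKH1 hrm.le
        calc vnorm ((H ^ k).mulVec x)
            ≤ Knorm H ^ (k % m) * vnorm ((H ^ (m * (k / m))).mulVec x) := hs1
          _ ≤ Knorm H ^ (k % m) * L ^ (k / m) :=
              mul_le_mul_of_nonneg_left (hs2.trans hs3)
                (pow_nonneg (Knorm_nonneg hHnn) _)
          _ ≤ KH ^ m * (max 1 L⁻¹ * (L ^ ((m:ℝ)⁻¹)) ^ k) :=
              mul_le_mul hKr hs4 (pow_nonneg hL.le _) (by positivity)
          _ = (KH ^ m * max 1 L⁻¹) * (L ^ ((m:ℝ)⁻¹)) ^ k := by ring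
      have hfin := limsup_root_le (snorm_nonneg hHnn hx) hC0 hr0 hev
      have e : rhox H x = Filter.atTop.limsup
          (fun k : ℕ => (vnorm ((H ^ k).mulVec x)) ^ ((k:ℝ)⁻¹)) := rfl
      rw [e]
      exact hfin
    have hto : Filter.Tendsto (fun ε : ℝ => (rhox Q x + ε) ^ ((m:ℝ)⁻¹))
        (nhdsWithin 0 (Set.Ioi 0)) (nhds (rhox Q x ^ ((m:ℝ)⁻¹))) := by
      have hmi : (0:ℝ) ≤ (m:ℝ)⁻¹ := by positivity
      have hcont : ContinuousAt (fun t : ℝ => t ^ ((m:ℝ)⁻¹)) (rhox Q x) :=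
        Real.continuousAt_rpow_const _ _ (Or.inr hmi)
      have hadd : Filter.Tendsto (fun ε : ℝ => rhox Q x + ε) (nhds 0) (nhds (rhox Q x)) := by
        have hcont2 : Continuous fun ε : ℝ => rhox Q x + ε := continuous_const.add continuous_id
        simpa using hcont2.tendsto 0
      exact (hcont.tendsto.comp hadd).mono_left nhdsWithin_le_nhds
    exact ge_of_tendsto_pos hto key
  exact ⟨partA, partB⟩

end MainLemma


private lemma cycProd_entry_nonneg {n m : ℕ} {A : Fin m → Matrix (Fin n) (Fin n) ℝ}
    (hA : ∀ l i j, 0 ≤ A l i j) (j : Fin m) (p q : Fin n) : 0 ≤ cycProd A j p q := by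
  apply list_prod_entry_nonneg
  intro M hM
  simp only [List.mem_ofFn] at hM
  obtain ⟨t, rfl⟩ := hM
  exact fun i j' => hA _ i j'

private lemma mul_entry_nonneg {n : ℕ} {B C : Matrix (Fin n) (Fin n) ℝ}
    (hB : ∀ i j, 0 ≤ B i j) (hC : ∀ i j, 0 ≤ C i j) (i j : Fin n) : 0 ≤ (B * C) i j := by
  rw [Matrix.mul_apply]
  exact Finset.sum_nonneg fun r _ => mul_nonneg (hB i r) (hC r j)

/-- `ρ_x(A₁ ∘ ⋯ ∘ A_m) ≤ ρ_x(P₁ ∘ ⋯ ∘ P_m)^{1/m} ≤ (ρ_x(P₁)⋯ρ_x(P_m))^{1/m}`;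
in particular `ρ_x(A∘B) ≤ ρ_x(AB ∘ BA)^{1/2} ≤ ρ_x(AB)^{1/2} ρ_x(BA)^{1/2}`. -/
theorem stmt17 {n m : ℕ} (hm : 0 < m) (A : Fin m → Matrix (Fin n) (Fin n) ℝ)
    (hA : ∀ l i j, 0 ≤ A l i j) (x : Fin n → ℝ) (hx : ∀ i, 0 ≤ x i) :
    (rhox (fun p q => ∏ l, A l p q) x ≤
        (rhox (fun p q => ∏ j, cycProd A j p q) x) ^ ((m : ℝ)⁻¹) ∧
      (rhox (fun p q => ∏ j, cycProd A j p q) x) ^ ((m : ℝ)⁻¹) ≤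
        (∏ j, rhox (cycProd A j) x) ^ ((m : ℝ)⁻¹)) ∧
    ∀ B C : Matrix (Fin n) (Fin n) ℝ, (∀ i j, 0 ≤ B i j) → (∀ i j, 0 ≤ C i j) →
      rhox (fun p q => B p q * C p q) x ≤
          (rhox (fun p q => (B * C) p q * (C * B) p q) x) ^ ((2 : ℝ)⁻¹) ∧
        (rhox (fun p q => (B * C) p q * (C * B) p q) x) ^ ((2 : ℝ)⁻¹) ≤
          (rhox (B * C) x) ^ ((2 : ℝ)⁻¹) * (rhox (C * B) x) ^ ((2 : ℝ)⁻¹) := by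
  have hmain := main_ineq hm A hA x hx
  have hQnn : ∀ p q, 0 ≤ (fun p q => ∏ j, cycProd A j p q : Matrix (Fin n) (Fin n) ℝ) p q :=
    fun p q => Finset.prod_nonneg fun j _ => cycProd_entry_nonneg hA j p q
  refine ⟨⟨hmain.1, ?_⟩, ?_⟩
  · exact Real.rpow_le_rpow (rhox_nonneg' hQnn hx) hmain.2 (by positivity)
  · intro B C hB hC
    have hA2 : ∀ (l : Fin 2) i j, 0 ≤ (![B, C]) l i j := by
      intro l i j
      fin_cases l
      · simpa using hB i j
      · simpa using hC i j
    have h2 := main_ineq (by norm_num : 0 < 2) ![B, C] hA2 x hx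
    have e0 : cycProd ![B, C] 0 = B * C := by
      simp [cycProd, List.ofFn_succ, show ((0:Fin 2) + 0) = 0 from rfl,
        show ((0:Fin 2) + 1) = 1 from rfl]
    have e1 : cycProd ![B, C] 1 = C * B := by
      simp [cycProd, List.ofFn_succ, show ((1:Fin 2) + 0) = 1 from rfl,
        show ((1:Fin 2) + 1) = 0 from rfl]
    have eH : (fun p q => ∏ l, (![B, C]) l p q : Matrix (Fin n) (Fin n) ℝ)
        = fun p q => B p q * C p q := by
      funext p q
      rw [Fin.prod_univ_two]
      simp
    have eQ : (fun p q => ∏ j, cycProd ![B, C] j p q : Matrix (Fin n) (Fin n) ℝ)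
        = fun p q => (B * C) p q * (C * B) p q := by
      funext p q
      rw [Fin.prod_univ_two, e0, e1]
    have eP : (∏ j, rhox (cycProd ![B, C] j) x) = rhox (B * C) x * rhox (C * B) x := by
      rw [Fin.prod_univ_two, e0, e1]
    have ecast : (((2:ℕ) : ℝ))⁻¹ = ((2:ℝ))⁻¹ := by norm_num
    have h21 := h2.1
    have h22 := h2.2
    rw [eH, eQ, ecast] at h21
    rw [eQ, eP] at h22
    have hQ2nn : ∀ p q, 0 ≤ (fun p q => (B * C) p q * (C * B) p q : Matrix (Fin n) (Fin n) ℝ) p q :=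
      fun p q => mul_nonneg (mul_entry_nonneg hB hC p q) (mul_entry_nonneg hC hB p q)
    refine ⟨h21, ?_⟩
    calc (rhox (fun p q => (B * C) p q * (C * B) p q) x) ^ ((2:ℝ)⁻¹)
        ≤ (rhox (B * C) x * rhox (C * B) x) ^ ((2:ℝ)⁻¹) :=
          Real.rpow_le_rpow (rhox_nonneg' hQ2nn hx) h22 (by norm_num)
      _ = (rhox (B * C) x) ^ ((2:ℝ)⁻¹) * (rhox (C * B) x) ^ ((2:ℝ)⁻¹) :=
          Real.mul_rpow (rhox_nonneg' (mul_entry_nonneg hB hC) hx)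
            (rhox_nonneg' (mul_entry_nonneg hC hB) hx)
end
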